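/- arXiv:1802.03210 — 8 statements merged into one kernel-verified Lean document; each statement's English description precedes it below -/
import Mathlib

section
/- Let k ≥ 0 and m ≥ 1, let n = (k+2)m, and let V = V_0 ∪ V_1 ∪ ⋯ ∪ V_{k+1} be a partition of an n-element set V into k+2 pairwise disjoint parts each of cardinality m. Let Δ_V be the full simplex on V, and let φ be the k-cochain of Δ_V over Z/2 that is the indicator of the set S = { {v_0, …, v_k} : v_i ∈ V_i for all 0 ≤ i ≤ k } of transversal k-faces. Then ‖φ‖_csy = ‖φ‖ = m^{k+1}. -/
open Finset

section Simplicial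

variable {V : Type*} [DecidableEq V]

/-- `X` is a finite abstract simplicial complex: a finite family of nonempty finite sets
closed under taking nonempty subsets. -/
def IsComplex (X : Finset (Finset V)) : Prop :=
  (∀ σ ∈ X, σ.Nonempty) ∧ ∀ σ ∈ X, ∀ τ ⊆ σ, τ.Nonempty → τ ∈ X

/-- The `k`-dimensional faces of `X` (faces of cardinality `k+1`). -/
def faces (X : Finset (Finset V)) (k : ℕ) : Finset (Finset V) :=
  X.filter fun σ => σ.card = k + 1

/-- The support of a `k`-cochain. -/
def csupp (X : Finset (Finset V)) (k : ℕ) (φ : Finset V → ZMod 2) : Finset (Finset V) :=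
  (faces X k).filter fun σ => φ σ ≠ 0

/-- The norm of a `k`-cochain. -/
def cnorm (X : Finset (Finset V)) (k : ℕ) (φ : Finset V → ZMod 2) : ℕ :=
  (csupp X k φ).card

/-- The coboundary of a `k`-cochain, as a `(k+1)`-cochain. -/
def cob (X : Finset (Finset V)) (k : ℕ) (φ : Finset V → ZMod 2) : Finset V → ZMod 2 :=
  fun τ => ∑ σ ∈ (faces X k).filter (fun σ => σ ⊆ τ), φ σ

/-- The cosystolic norm of a `k`-cochain, with the reduced convention at `k = 0`. -/
noncomputable def cosys (X : Finset (Finset V)) (k : ℕ) (φ : Finset V → ZMod 2) : ℕ :=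
  if k = 0 then
    min (cnorm X 0 φ) (cnorm X 0 fun σ => 1 + φ σ)
  else
    sInf {m | ∃ ψ : Finset V → ZMod 2, m = cnorm X k fun τ => φ τ + cob X (k - 1) ψ τ}

/-- The `k`-th (coboundary) Cheeger constant, valued in `ℝ≥0∞` (`⊤` if no cochain has
positive cosystolic norm). -/
noncomputable def cheeger (X : Finset (Finset V)) (k : ℕ) : ENNReal :=
  sInf {r : ENNReal | ∃ φ : Finset V → ZMod 2, 0 < cosys X k φ ∧
    r = (cnorm X (k + 1) (cob X k φ) : ENNReal) / (cosys X k φ : ENNReal)}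

/-- The boundary of a `k`-chain, as a `(k-1)`-chain. -/
def bdry (X : Finset (Finset V)) (k : ℕ) (c : Finset V → ZMod 2) : Finset V → ZMod 2 :=
  fun τ => ∑ σ ∈ (faces X k).filter (fun σ => τ ⊆ σ), c σ

/-- A `k`-cycle, with the reduced convention at `k = 0`. -/
def IsCycle (X : Finset (Finset V)) (k : ℕ) (c : Finset V → ZMod 2) : Prop :=
  if k = 0 then ∑ σ ∈ faces X 0, c σ = 0
  else ∀ τ ∈ faces X (k - 1), bdry X k c τ = 0

/-- Evaluation of a `k`-cochain on a `k`-chain. -/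
def eval (X : Finset (Finset V)) (k : ℕ) (φ c : Finset V → ZMod 2) : ZMod 2 :=
  ∑ σ ∈ faces X k, φ σ * c σ

end Simplicial

set_option linter.unusedSectionVars false

namespace TvAux
open Finset



variable {V : Type*} {k m : ℕ}

/-- The chosen enumeration of part `i`. -/
noncomputable def tvE (P : Fin (k + 2) → Finset V) (hcard : ∀ i, (P i).card = m) (i : Fin (k + 2))
    (x : Fin m) : V :=
  ((Finset.equivFinOfCardEq (hcard i)).symm x : V)

lemma tvE_mem (P : Fin (k + 2) → Finset V) (hcard : ∀ i, (P i).card = m) (i : Fin (k + 2))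
    (x : Fin m) : tvE P hcard i x ∈ P i :=
  Finset.coe_mem _

lemma tvE_inj (P : Fin (k + 2) → Finset V) (hcard : ∀ i, (P i).card = m) (i : Fin (k + 2))
    {x y : Fin m} (h : tvE P hcard i x = tvE P hcard i y) : x = y := by
  have := (Finset.equivFinOfCardEq (hcard i)).symm.injective (Subtype.ext h)
  exact this

lemma tvE_surj (P : Fin (k + 2) → Finset V) (hcard : ∀ i, (P i).card = m) (i : Fin (k + 2))
    {v : V} (hv : v ∈ P i) : ∃ x, tvE P hcard i x = v :=
  ⟨Finset.equivFinOfCardEq (hcard i) ⟨v, hv⟩, by simp [tvE]⟩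

lemma part_eq {P : Fin (k + 2) → Finset V} (hdisj : ∀ i j, i ≠ j → Disjoint (P i) (P j))
    {v : V} {i j : Fin (k + 2)} (hi : v ∈ P i) (hj : v ∈ P j) : i = j := by
  by_contra hne
  exact (Finset.disjoint_left.mp (hdisj i j hne)) hi hj

/-- The "color" of a tuple: the sum of its coordinates mod `m`. -/
def tvS (hm : 1 ≤ m) (a : Fin (k + 1) → Fin m) : Fin m :=
  ⟨(∑ i, (a i : ℕ)) % m, Nat.mod_lt _ hm⟩

/-- Extension of a tuple by its color. -/
def tvA (hm : 1 ≤ m) (a : Fin (k + 1) → Fin m) : Fin (k + 2) → Fin m :=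
  Fin.snoc a (tvS hm a)

lemma tvA_castSucc (hm : 1 ≤ m) (a : Fin (k + 1) → Fin m) (i : Fin (k + 1)) :
    tvA hm a i.castSucc = a i := by simp [tvA]

lemma tvA_last (hm : 1 ≤ m) (a : Fin (k + 1) → Fin m) :
    tvA hm a (Fin.last (k + 1)) = tvS hm a := by simp [tvA]

/-- Tuples whose extensions differ in at most one coordinate are equal. -/
lemma tvA_code (hm : 1 ≤ m) (a b : Fin (k + 1) → Fin m) (i0 : Fin (k + 2))
    (h : ∀ j, tvA hm a j ≠ tvA hm b j → j = i0) : a = b := by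
  induction i0 using Fin.lastCases with
  | last =>
    funext j
    by_contra hne
    have : tvA hm a j.castSucc ≠ tvA hm b j.castSucc := by
      rw [tvA_castSucc, tvA_castSucc]; exact hne
    exact (Fin.castSucc_lt_last j).ne (h _ this)
  | cast i =>
    have hsum : tvS hm a = tvS hm b := by
      by_contra hne
      have : tvA hm a (Fin.last (k + 1)) ≠ tvA hm b (Fin.last (k + 1)) := by
        rw [tvA_last, tvA_last]; exact hne
      exact (Fin.castSucc_lt_last i).ne (h _ this).symm
    have hoff : ∀ j : Fin (k + 1), j ≠ i → a j = b j := by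
      intro j hj
      by_contra hne
      have : tvA hm a j.castSucc ≠ tvA hm b j.castSucc := by
        rw [tvA_castSucc, tvA_castSucc]; exact hne
      exact hj (Fin.castSucc_injective _ (h _ this))
    have hii : a i = b i := by
      have hv : ((∑ j, (a j : ℕ)) % m) = ((∑ j, (b j : ℕ)) % m) :=
        congrArg Fin.val hsum
      have hrest : (∑ j ∈ univ.erase i, (a j : ℕ)) = ∑ j ∈ univ.erase i, (b j : ℕ) :=
        Finset.sum_congr rfl fun j hj => by
          rw [hoff j (Finset.mem_erase.mp hj).1]
      have hsa : (∑ j, (a j : ℕ)) = (a i : ℕ) + ∑ j ∈ univ.erase i, (a j : ℕ) :=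
        (Finset.add_sum_erase _ _ (Finset.mem_univ i)).symm
      have hsb : (∑ j, (b j : ℕ)) = (b i : ℕ) + ∑ j ∈ univ.erase i, (b j : ℕ) :=
        (Finset.add_sum_erase _ _ (Finset.mem_univ i)).symm
      have hmod : (a i : ℕ) ≡ (b i : ℕ) [MOD m] := by
        apply Nat.ModEq.add_right_cancel' (∑ j ∈ univ.erase i, (a j : ℕ))
        have : ((a i : ℕ) + ∑ j ∈ univ.erase i, (a j : ℕ)) % m
            = ((b i : ℕ) + ∑ j ∈ univ.erase i, (b j : ℕ)) % m := by
          rw [← hsa, ← hsb]; exact hv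
        rw [Nat.ModEq, this, hrest]
      have : (a i : ℕ) % m = (b i : ℕ) % m := hmod
      rw [Nat.mod_eq_of_lt (a i).isLt, Nat.mod_eq_of_lt (b i).isLt] at this
      exact Fin.ext this
    funext j
    by_cases hj : j = i
    · rw [hj]; exact hii
    · exact hoff j hj

variable {V : Type*} [DecidableEq V] {k m : ℕ}

variable (P : Fin (k + 2) → Finset V) (hcard : ∀ i, (P i).card = m) (hm : 1 ≤ m)

noncomputable def tvF (a : Fin (k + 1) → Fin m) (i : Fin (k + 2)) : V :=
  tvE P hcard i (tvA hm a i)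

/-- The `(k+1)`-dimensional face attached to the tuple `a`. -/
noncomputable def tvT (a : Fin (k + 1) → Fin m) : Finset V :=
  Finset.image (tvF P hcard hm a) univ

/-- The transversal `k`-face attached to the tuple `a`. -/
noncomputable def tvSig (a : Fin (k + 1) → Fin m) : Finset V :=
  Finset.image (fun i : Fin (k + 1) => tvF P hcard hm a i.castSucc) univ

lemma tvF_mem (a : Fin (k + 1) → Fin m) (i : Fin (k + 2)) : tvF P hcard hm a i ∈ P i :=
  tvE_mem _ _ _ _

variable {P} (hdisj : ∀ i j, i ≠ j → Disjoint (P i) (P j))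
include hdisj

lemma tvF_inj (a : Fin (k + 1) → Fin m) : Function.Injective (tvF P hcard hm a) := by
  intro i j h
  exact part_eq hdisj (h ▸ tvF_mem P hcard hm a i) (tvF_mem P hcard hm a j)

lemma tvT_card (a : Fin (k + 1) → Fin m) : (tvT P hcard hm a).card = k + 2 := by
  rw [tvT, Finset.card_image_of_injective _ (tvF_inj hcard hm hdisj a), card_univ,
    Fintype.card_fin]

lemma tvSig_card (a : Fin (k + 1) → Fin m) : (tvSig P hcard hm a).card = k + 1 := by
  rw [tvSig, Finset.card_image_of_injective, card_univ, Fintype.card_fin]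
  intro i j h
  exact Fin.castSucc_injective _ (tvF_inj hcard hm hdisj a h)

lemma tvSig_subset (a : Fin (k + 1) → Fin m) : tvSig P hcard hm a ⊆ tvT P hcard hm a := by
  intro v hv
  rw [tvSig, Finset.mem_image] at hv
  obtain ⟨i, -, rfl⟩ := hv
  exact Finset.mem_image_of_mem _ (mem_univ _)

lemma tvT_inter (a : Fin (k + 1) → Fin m) (i : Fin (k + 2)) :
    tvT P hcard hm a ∩ P i = {tvF P hcard hm a i} := by
  ext v
  simp only [Finset.mem_inter, Finset.mem_singleton, tvT, Finset.mem_image, mem_univ,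
    true_and]
  constructor
  · rintro ⟨⟨j, rfl⟩, hv⟩
    obtain rfl : i = j := part_eq hdisj hv (tvF_mem P hcard hm a j)
    rfl
  · rintro rfl
    exact ⟨⟨i, rfl⟩, tvF_mem P hcard hm a i⟩

lemma tvSig_inter (a : Fin (k + 1) → Fin m) (i : Fin (k + 1)) :
    tvSig P hcard hm a ∩ P i.castSucc = {tvF P hcard hm a i.castSucc} := by
  apply Finset.Subset.antisymm
  · calc tvSig P hcard hm a ∩ P i.castSucc
        ⊆ tvT P hcard hm a ∩ P i.castSucc :=
          Finset.inter_subset_inter (tvSig_subset hcard hm hdisj a) (Finset.Subset.refl _)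
    _ = {tvF P hcard hm a i.castSucc} := tvT_inter hcard hm hdisj a i.castSucc
  · rw [Finset.singleton_subset_iff, Finset.mem_inter]
    exact ⟨Finset.mem_image_of_mem _ (mem_univ i), tvF_mem P hcard hm a i.castSucc⟩

/-- Any `(k+1)`-subset common to two attached faces forces the tuples to agree. -/
lemma tvKey {σ : Finset V} {a b : Fin (k + 1) → Fin m} (hσ : σ.card = k + 1)
    (ha : σ ⊆ tvT P hcard hm a) (hb : σ ⊆ tvT P hcard hm b) : a = b := by
  classical
  set I : Finset (Fin (k + 2)) :=
    univ.filter (fun i => tvF P hcard hm a i = tvF P hcard hm b i) with hI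
  have hcov : σ ⊆ Finset.image (tvF P hcard hm a) I := by
    intro v hv
    have hva := ha hv
    have hvb := hb hv
    rw [tvT, Finset.mem_image] at hva hvb
    obtain ⟨i, -, rfl⟩ := hva
    obtain ⟨j, -, hj⟩ := hvb
    obtain rfl : j = i :=
      part_eq hdisj (hj ▸ tvF_mem P hcard hm b j) (tvF_mem P hcard hm a i)
    rw [Finset.mem_image]
    exact ⟨j, Finset.mem_filter.mpr ⟨mem_univ _, hj.symm⟩, rfl⟩
  have hIcard : k + 1 ≤ I.card := by
    calc k + 1 = σ.card := hσ.symm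
    _ ≤ (Finset.image (tvF P hcard hm a) I).card := Finset.card_le_card hcov
    _ ≤ I.card := Finset.card_image_le
  have hbad : (univ.filter (fun i => tvA hm a i ≠ tvA hm b i)).card ≤ 1 := by
    have hsub : univ.filter (fun i => tvA hm a i ≠ tvA hm b i)
        ⊆ univ.filter (fun i => ¬ (tvF P hcard hm a i = tvF P hcard hm b i)) := by
      intro i hi
      simp only [Finset.mem_filter, mem_univ, true_and] at hi ⊢
      intro hF
      exact hi (tvE_inj P hcard i hF)
    have := Finset.card_le_card hsub
    have hsplit := Finset.card_filter_add_card_filter_not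
      (s := (univ : Finset (Fin (k + 2))))
      (fun i => tvF P hcard hm a i = tvF P hcard hm b i)
    rw [card_univ, Fintype.card_fin, ← hI] at hsplit
    omega
  rcases Finset.card_le_one.mp hbad with h1
  by_cases hne : (univ.filter (fun i => tvA hm a i ≠ tvA hm b i)).Nonempty
  · obtain ⟨i0, hi0⟩ := hne
    refine tvA_code hm a b i0 fun j hj => ?_
    exact h1 _ (by simp [Finset.mem_filter, hj]) _ hi0
  · rw [Finset.not_nonempty_iff_eq_empty] at hne
    refine tvA_code hm a b 0 fun j hj => ?_
    exact absurd (Finset.eq_empty_iff_forall_notMem.mp hne j) (by simp [hj])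

end TvAux

open TvAux

/-- On the full simplex on a vertex set partitioned into `k+2` parts of size `m`, the
indicator cochain of the set of transversal `k`-faces (those meeting each of the first
`k+1` parts in exactly one vertex) is a cosystole of norm `m^(k+1)`. -/
theorem transversal_cosystole {V : Type*} [DecidableEq V] (k m : ℕ) (hm : 1 ≤ m)
    (P : Fin (k + 2) → Finset V)
    (hdisj : ∀ i j, i ≠ j → Disjoint (P i) (P j))
    (hcard : ∀ i, (P i).card = m)
    (X : Finset (Finset V))
    (hXdef : X = (Finset.univ.biUnion P).powerset.filter fun σ => σ.Nonempty)
    (φ : Finset V → ZMod 2)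
    (hφ : ∀ σ : Finset V,
      φ σ = if (∀ i : Fin (k + 2), (i : ℕ) ≤ k → (σ ∩ P i).card = 1) ∧ σ.card = k + 1
        then 1 else 0) :
    cosys X k φ = cnorm X k φ ∧ cnorm X k φ = m ^ (k + 1) := by
  classical
  have hXmem : ∀ s : Finset V, s ∈ X ↔ s ⊆ Finset.univ.biUnion P ∧ s.Nonempty := by
    intro s; rw [hXdef]; simp [Finset.mem_filter, Finset.mem_powerset]
  have hTbi : ∀ a : Fin (k + 1) → Fin m, tvT P hcard hm a ⊆ Finset.univ.biUnion P := by
    intro a v hv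
    rw [tvT, Finset.mem_image] at hv
    obtain ⟨i, -, rfl⟩ := hv
    exact Finset.mem_biUnion.mpr ⟨i, Finset.mem_univ _, tvF_mem P hcard hm a i⟩
  -- the transversality condition
  set Q : Finset V → Prop :=
    fun σ => (∀ i : Fin (k + 2), (i : ℕ) ≤ k → (σ ∩ P i).card = 1) ∧ σ.card = k + 1
    with hQ
  have hQSig : ∀ a : Fin (k + 1) → Fin m, Q (tvSig P hcard hm a) := by
    intro a
    constructor
    · intro i hi
      have hi' : (i : ℕ) < k + 1 := by omega
      have : i = (⟨(i : ℕ), hi'⟩ : Fin (k + 1)).castSucc := by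
        apply Fin.ext; simp
      rw [this, tvSig_inter hcard hm hdisj a]
      exact Finset.card_singleton _
    · exact tvSig_card hcard hm hdisj a
  have hSigFaces : ∀ a : Fin (k + 1) → Fin m, tvSig P hcard hm a ∈ faces X k := by
    intro a
    rw [faces, Finset.mem_filter]
    refine ⟨(hXmem _).mpr ⟨(tvSig_subset hcard hm hdisj a).trans (hTbi a), ?_⟩,
      tvSig_card hcard hm hdisj a⟩
    rw [← Finset.card_pos, tvSig_card hcard hm hdisj a]; omega
  have hφSig : ∀ a : Fin (k + 1) → Fin m, φ (tvSig P hcard hm a) = 1 := by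
    intro a; rw [hφ]; exact if_pos (hQSig a)
  -- any transversal face inside T a equals Sig a
  have hQsub : ∀ (σ : Finset V) (a : Fin (k + 1) → Fin m),
      Q σ → σ ⊆ tvT P hcard hm a → σ = tvSig P hcard hm a := by
    intro σ a hQσ hsub
    obtain ⟨h1, h2⟩ := hQσ
    have hsub2 : tvSig P hcard hm a ⊆ σ := by
      intro v hv
      rw [tvSig, Finset.mem_image] at hv
      obtain ⟨i, -, rfl⟩ := hv
      have hc : (σ ∩ P i.castSucc).card = 1 := h1 i.castSucc (by simp; omega)
      have hss : σ ∩ P i.castSucc ⊆ {tvF P hcard hm a i.castSucc} := by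
        rw [← tvT_inter hcard hm hdisj a]
        exact Finset.inter_subset_inter hsub (Finset.Subset.refl _)
      obtain ⟨x, hx⟩ := Finset.card_eq_one.mp hc
      have hx1 : x ∈ σ ∩ P i.castSucc := hx ▸ Finset.mem_singleton_self x
      have hx2 : x = tvF P hcard hm a i.castSucc :=
        Finset.mem_singleton.mp (hss hx1)
      rw [← hx2]
      exact (Finset.mem_inter.mp hx1).1
    exact (Finset.eq_of_subset_of_card_le hsub2
      (by rw [h2, tvSig_card hcard hm hdisj a])).symm
  -- the support of φ
  have hsupp : csupp X k φ = Finset.image (tvSig P hcard hm) Finset.univ := by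
    ext σ
    rw [csupp, Finset.mem_filter, Finset.mem_image]
    constructor
    · rintro ⟨hf, hne⟩
      have hQσ : Q σ := by
        by_contra hc
        rw [hφ, if_neg hc] at hne
        exact hne rfl
      obtain ⟨h1, h2⟩ := hQσ
      have hex : ∀ i : Fin (k + 1), ∃ x, σ ∩ P i.castSucc = {x} := by
        intro i
        exact Finset.card_eq_one.mp (h1 i.castSucc (by simp; omega))
      choose x hx using hex
      have hxmem : ∀ i, x i ∈ σ ∩ P i.castSucc := fun i =>
        (hx i) ▸ Finset.mem_singleton_self _
      set a : Fin (k + 1) → Fin m := fun i =>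
        Finset.equivFinOfCardEq (hcard i.castSucc)
          ⟨x i, (Finset.mem_inter.mp (hxmem i)).2⟩ with ha
      refine ⟨a, Finset.mem_univ _, ?_⟩
      have hFx : ∀ i : Fin (k + 1), tvF P hcard hm a i.castSucc = x i := by
        intro i
        rw [tvF, tvA_castSucc, ha, tvE]
        simp
      have hsub2 : tvSig P hcard hm a ⊆ σ := by
        intro v hv
        rw [tvSig, Finset.mem_image] at hv
        obtain ⟨i, -, rfl⟩ := hv
        rw [hFx i]
        exact (Finset.mem_inter.mp (hxmem i)).1
      exact Finset.eq_of_subset_of_card_le hsub2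
        (by rw [h2, tvSig_card hcard hm hdisj a])
    · rintro ⟨a, -, rfl⟩
      refine ⟨hSigFaces a, ?_⟩
      rw [hφSig a]
      decide
  have hSigInj : Function.Injective (tvSig P hcard hm) := by
    intro a b hab
    exact tvKey hcard hm hdisj (tvSig_card hcard hm hdisj a)
      (tvSig_subset hcard hm hdisj a) (hab ▸ tvSig_subset hcard hm hdisj b)
  have hcnorm : cnorm X k φ = m ^ (k + 1) := by
    rw [cnorm, hsupp, Finset.card_image_of_injective _ hSigInj, Finset.card_univ,
      Fintype.card_fun, Fintype.card_fin, Fintype.card_fin]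
  refine ⟨?_, hcnorm⟩
  rcases Nat.eq_zero_or_pos k with hk | hk
  · -- the case k = 0
    subst hk
    rw [cosys, if_pos rfl]
    have hfaces0 : faces X 0
        = Finset.image (fun v => ({v} : Finset V)) (Finset.univ.biUnion P) := by
      ext σ
      rw [faces, Finset.mem_filter, Finset.mem_image]
      constructor
      · rintro ⟨hσX, hc⟩
        obtain ⟨v, rfl⟩ := Finset.card_eq_one.mp hc
        exact ⟨v, ((hXmem _).mp hσX).1 (Finset.mem_singleton_self v), rfl⟩
      · rintro ⟨v, hv, rfl⟩
        exact ⟨(hXmem _).mpr ⟨Finset.singleton_subset_iff.mpr hv,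
          Finset.singleton_nonempty v⟩, Finset.card_singleton v⟩
    have hfc : (faces X 0).card = 2 * m := by
      rw [hfaces0, Finset.card_image_of_injective _ Finset.singleton_injective,
        Finset.card_biUnion (fun i _ j _ hij => hdisj i j hij)]
      simp [hcard]
    have hkey : csupp X 0 (fun σ => 1 + φ σ) = (faces X 0).filter (fun σ => ¬ (φ σ ≠ 0)) := by
      rw [csupp]
      apply Finset.filter_congr
      intro σ _
      have h2 : ∀ x : ZMod 2, ((1 : ZMod 2) + x ≠ 0 ↔ ¬ x ≠ 0) := by decide
      exact h2 (φ σ)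
    have hsplit := Finset.card_filter_add_card_filter_not
      (s := faces X 0) (fun σ => φ σ ≠ 0)
    have hne : cnorm X 0 (fun σ => 1 + φ σ) = 2 * m - m ^ (0 + 1) := by
      rw [cnorm, hkey]
      have hc0 : cnorm X 0 φ = ((faces X 0).filter (fun σ => φ σ ≠ 0)).card := rfl
      omega
    rw [hne]
    have : m ^ (0 + 1) = m := by ring
    omega
  · -- the case k ≥ 1
    have hk0 : k ≠ 0 := by omega
    rw [cosys, if_neg hk0]
    have hzero : (fun τ => φ τ + cob X (k - 1) (fun _ => 0) τ) = φ := by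
      funext τ; simp [cob]
    have hmem : cnorm X k φ ∈ {n | ∃ ψ : Finset V → ZMod 2,
        n = cnorm X k fun τ => φ τ + cob X (k - 1) ψ τ} := ⟨fun _ => 0, by rw [hzero]⟩
    have hlow : ∀ ψ : Finset V → ZMod 2,
        m ^ (k + 1) ≤ cnorm X k (fun τ => φ τ + cob X (k - 1) ψ τ) := by
      intro ψ
      set φ' : Finset V → ZMod 2 := fun τ => φ τ + cob X (k - 1) ψ τ with hφ'
      -- the sum of φ' over the k-faces inside T a is 1
      have hsum1 : ∀ a : Fin (k + 1) → Fin m,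
          ∑ σ ∈ (faces X k).filter (fun σ => σ ⊆ tvT P hcard hm a), φ' σ = 1 := by
        intro a
        rw [hφ', Finset.sum_add_distrib]
        have hA : ∑ σ ∈ (faces X k).filter (fun σ => σ ⊆ tvT P hcard hm a), φ σ = 1 := by
          rw [← Finset.sum_filter_ne_zero]
          have hfil : ((faces X k).filter (fun σ => σ ⊆ tvT P hcard hm a)).filter
              (fun σ => φ σ ≠ 0) = {tvSig P hcard hm a} := by
            ext σ
            simp only [Finset.mem_filter, Finset.mem_singleton]
            constructor
            · rintro ⟨⟨hσf, hσT⟩, hne⟩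
              have hQσ : Q σ := by
                by_contra hc
                rw [hφ, if_neg hc] at hne
                exact hne rfl
              exact hQsub σ a hQσ hσT
            · rintro rfl
              refine ⟨⟨hSigFaces a, tvSig_subset hcard hm hdisj a⟩, ?_⟩
              rw [hφSig a]; decide
          rw [hfil, Finset.sum_singleton, hφSig a]
        have hB : ∑ σ ∈ (faces X k).filter (fun σ => σ ⊆ tvT P hcard hm a),
            cob X (k - 1) ψ σ = 0 := by
          have h2smul : ∀ x : ZMod 2, 2 • x = 0 := by decide
          calc ∑ σ ∈ (faces X k).filter (fun σ => σ ⊆ tvT P hcard hm a), cob X (k - 1) ψ σ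
              = ∑ σ ∈ (faces X k).filter (fun σ => σ ⊆ tvT P hcard hm a),
                ∑ ρ ∈ faces X (k - 1), if ρ ⊆ σ then ψ ρ else 0 := by
                refine Finset.sum_congr rfl fun σ _ => ?_
                rw [cob, Finset.sum_filter]
            _ = ∑ ρ ∈ faces X (k - 1),
                ∑ σ ∈ (faces X k).filter (fun σ => σ ⊆ tvT P hcard hm a),
                  if ρ ⊆ σ then ψ ρ else 0 := Finset.sum_comm
            _ = 0 := by
                refine Finset.sum_eq_zero fun ρ hρ => ?_
                rw [← Finset.sum_filter, Finset.sum_const]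
                have hρc : ρ.card = k := by
                  have := (Finset.mem_filter.mp hρ).2
                  omega
                by_cases hρT : ρ ⊆ tvT P hcard hm a
                · have himg : ((faces X k).filter
                      (fun σ => σ ⊆ tvT P hcard hm a)).filter (fun σ => ρ ⊆ σ)
                      = Finset.image (fun x => insert x ρ) (tvT P hcard hm a \ ρ) := by
                    ext σ
                    simp only [Finset.mem_filter, Finset.mem_image, Finset.mem_sdiff,
                      faces]
                    constructor
                    · rintro ⟨⟨⟨hσX, hσc⟩, hσT⟩, hρσ⟩
                      have hsd : (σ \ ρ).card = 1 := by
                        rw [Finset.card_sdiff_of_subset hρσ, hσc, hρc]; omega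
                      obtain ⟨x, hx⟩ := Finset.card_eq_one.mp hsd
                      have hxm : x ∈ σ \ ρ := hx ▸ Finset.mem_singleton_self x
                      obtain ⟨hxσ, hxρ⟩ := Finset.mem_sdiff.mp hxm
                      refine ⟨x, ⟨hσT hxσ, hxρ⟩, ?_⟩
                      apply Finset.eq_of_subset_of_card_le
                      · exact Finset.insert_subset hxσ hρσ
                      · rw [Finset.card_insert_of_notMem hxρ]; omega
                    · rintro ⟨x, ⟨hxT, hxρ⟩, rfl⟩
                      have hsubT : insert x ρ ⊆ tvT P hcard hm a :=
                        Finset.insert_subset hxT hρT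
                      refine ⟨⟨⟨(hXmem _).mpr ⟨hsubT.trans (hTbi a),
                        Finset.insert_nonempty _ _⟩, ?_⟩, hsubT⟩,
                        Finset.subset_insert _ _⟩
                      rw [Finset.card_insert_of_notMem hxρ, hρc]
                  have hcount : (((faces X k).filter
                      (fun σ => σ ⊆ tvT P hcard hm a)).filter (fun σ => ρ ⊆ σ)).card = 2 := by
                    rw [himg, Finset.card_image_of_injOn, Finset.card_sdiff_of_subset hρT,
                      tvT_card hcard hm hdisj a, hρc]
                    · omega
                    · intro x hx y hy hxy
                      have hxρ : x ∉ ρ := (Finset.mem_sdiff.mp hx).2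
                      have hyρ : y ∉ ρ := (Finset.mem_sdiff.mp hy).2
                      have hxy' : insert x ρ = insert y ρ := hxy
                      have : x ∈ insert y ρ := hxy' ▸ Finset.mem_insert_self x ρ
                      rcases Finset.mem_insert.mp this with h | h
                      · exact h
                      · exact absurd h hxρ
                  rw [hcount, h2smul]
                · have hemp : ((faces X k).filter
                      (fun σ => σ ⊆ tvT P hcard hm a)).filter (fun σ => ρ ⊆ σ) = ∅ := by
                    rw [Finset.eq_empty_iff_forall_notMem]
                    intro σ hσ
                    rw [Finset.mem_filter, Finset.mem_filter] at hσ
                    exact hρT (Finset.Subset.trans hσ.2 hσ.1.2)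
                  rw [hemp, Finset.card_empty, zero_smul]
        rw [hA, hB, add_zero]
      -- choose a nonzero face of φ' inside each T a
      have hexist : ∀ a : Fin (k + 1) → Fin m,
          ∃ σ, (σ ∈ faces X k ∧ σ ⊆ tvT P hcard hm a) ∧ φ' σ ≠ 0 := by
        intro a
        by_contra hc
        push_neg at hc
        have hz : ∑ σ ∈ (faces X k).filter (fun σ => σ ⊆ tvT P hcard hm a), φ' σ = 0 := by
          refine Finset.sum_eq_zero fun σ hσ => ?_
          obtain ⟨h1, h2⟩ := Finset.mem_filter.mp hσ
          exact hc σ ⟨h1, h2⟩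
        rw [hsum1 a] at hz
        exact one_ne_zero hz
      choose sel h1 h2 using hexist
      have hmaps : ∀ a ∈ (Finset.univ : Finset (Fin (k + 1) → Fin m)),
          sel a ∈ csupp X k φ' := by
        intro a _
        exact Finset.mem_filter.mpr ⟨(h1 a).1, h2 a⟩
      have hinj : Set.InjOn sel (Finset.univ : Finset (Fin (k + 1) → Fin m)) := by
        intro a _ b _ hab
        have hcσ : (sel a).card = k + 1 := (Finset.mem_filter.mp (h1 a).1).2
        exact tvKey hcard hm hdisj hcσ (h1 a).2 (hab ▸ (h1 b).2)
      calc m ^ (k + 1) = (Finset.univ : Finset (Fin (k + 1) → Fin m)).card := by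
            rw [Finset.card_univ, Fintype.card_fun, Fintype.card_fin, Fintype.card_fin]
        _ ≤ (csupp X k φ').card := Finset.card_le_card_of_injOn sel hmaps hinj
        _ = cnorm X k φ' := rfl
    refine le_antisymm (Nat.sInf_le hmem) ?_
    obtain ⟨ψ, hψ⟩ := Nat.sInf_mem (⟨_, hmem⟩ : Set.Nonempty _)
    rw [hcnorm, hψ]
    exact hlow ψ
end

section
/- Lower bound on expansion via cochain homotopy: Let X be a finite abstract simplicial complex and k ≥ 0 with X(k+1) ≠ ∅, and let (S, μ) be a finite probability space. Suppose that for every s ∈ S and σ ∈ X(k) a (k+1)-chain c_{s,σ} of X over Z/2 is given, and for every s ∈ S and τ ∈ X(k−1) a k-chain c_{s,τ} is given, such that for every (s, σ): ∂_{k+1} c_{s,σ} = 1_σ + Σ_{j=0}^{k} c_{s,σ_j}, where σ_0, …, σ_k are the (k−1)-dimensional faces of σ and 1_σ is the indicator k-chain of σ. For τ ∈ X(k+1) and s ∈ S set δ_s(τ) = |{σ ∈ X(k) : c_{s,σ}(τ) ≠ 0}|. Then every k-cochain φ of X over Z/2 satisfies ‖φ‖_csy ≤ (max_{τ ∈ X(k+1)}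 Σ_{s ∈ S} μ(s)·δ_s(τ)) · ‖d_kφ‖; in particular h^k(X) ≥ (max_{τ ∈ X(k+1)} Σ_{s ∈ S} μ(s)·δ_s(τ))^{−1}. -/
open Finset

section Helpers

variable {V : Type*} [DecidableEq V]

lemma swap_eval (X : Finset (Finset V)) (k : ℕ) (φ g : Finset V → ZMod 2) :
    ∑ ρ ∈ faces X k, φ ρ * bdry X (k + 1) g ρ
      = ∑ π ∈ faces X (k + 1), cob X k φ π * g π := by
  unfold bdry cob
  simp only [Finset.mul_sum, Finset.sum_mul, Finset.sum_filter, ite_mul, mul_ite,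
    zero_mul, mul_zero]
  exact Finset.sum_comm

lemma cnorm_congr (X : Finset (Finset V)) (k : ℕ) {f g : Finset V → ZMod 2}
    (h : ∀ σ ∈ faces X k, f σ = g σ) : cnorm X k f = cnorm X k g := by
  unfold cnorm csupp
  rw [Finset.filter_congr (fun σ hσ => by rw [h σ hσ])]

lemma filter_faces_eq (X : Finset (Finset V)) (hX : IsComplex X) {k : ℕ} (hk : 1 ≤ k)
    {σ : Finset V} (hσ : σ ∈ faces X k) :
    (faces X (k - 1)).filter (fun τ => τ ⊆ σ) = σ.powersetCard k := by
  simp only [faces, Finset.mem_filter] at hσ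
  ext τ
  simp only [faces, Finset.mem_filter, Finset.mem_powersetCard]
  constructor
  · rintro ⟨⟨hτX, hcard⟩, hsub⟩
    exact ⟨hsub, by omega⟩
  · rintro ⟨hsub, hcard⟩
    refine ⟨⟨hX.2 σ hσ.1 τ hsub ?_, by omega⟩, hsub⟩
    rw [← Finset.card_pos, hcard]; omega

lemma key_identity (X : Finset (Finset V)) (k : ℕ)
    (c : Finset V → (Finset V → ZMod 2)) (φ : Finset V → ZMod 2)
    (hhom : ∀ σ ∈ faces X k, ∀ ρ ∈ faces X k,
      bdry X (k + 1) (c σ) ρ =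
        (if ρ = σ then 1 else 0) + ∑ τ ∈ σ.powersetCard k, c τ ρ)
    {σ : Finset V} (hσ : σ ∈ faces X k) :
    ∑ τ ∈ σ.powersetCard k, eval X k φ (c τ)
      = φ σ + eval X (k + 1) (cob X k φ) (c σ) := by
  have flip : ∀ a b d : ZMod 2, a = d + b → b = a + d := by decide
  unfold eval
  rw [Finset.sum_comm]
  have step : ∀ ρ ∈ faces X k,
      ∑ τ ∈ σ.powersetCard k, φ ρ * c τ ρ
        = φ ρ * bdry X (k + 1) (c σ) ρ + φ ρ * (if ρ = σ then 1 else 0) := by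
    intro ρ hρ
    rw [← Finset.mul_sum, flip _ _ _ (hhom σ hσ ρ hρ), mul_add]
  rw [Finset.sum_congr rfl step, Finset.sum_add_distrib, swap_eval]
  simp only [mul_ite, mul_one, mul_zero, Finset.sum_ite_eq', hσ, if_pos]
  exact add_comm _ _

lemma cosys_le (X : Finset (Finset V)) (hX : IsComplex X) (k : ℕ)
    (c : Finset V → (Finset V → ZMod 2)) (φ : Finset V → ZMod 2)
    (hhom : ∀ σ ∈ faces X k, ∀ ρ ∈ faces X k,
      bdry X (k + 1) (c σ) ρ =
        (if ρ = σ then 1 else 0) + ∑ τ ∈ σ.powersetCard k, c τ ρ) :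
    cosys X k φ ≤ cnorm X k (fun σ => eval X (k + 1) (cob X k φ) (c σ)) := by
  rcases Nat.eq_zero_or_pos k with hk | hk
  · subst hk
    have two : ∀ x : ZMod 2, x = 0 ∨ x = 1 := by decide
    have hξ : ∀ σ ∈ faces X 0, eval X 1 (cob X 0 φ) (c σ) = φ σ + eval X 0 φ (c ∅) := by
      intro σ hσ
      have h := key_identity X 0 c φ hhom hσ
      rw [Finset.powersetCard_zero, Finset.sum_singleton] at h
      have flip : ∀ a b d : ZMod 2, a = d + b → b = d + a := by decide
      exact flip _ _ _ h
    rcases two (eval X 0 φ (c ∅)) with he | he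
    · rw [cosys, if_pos rfl,
        cnorm_congr X 0 (g := fun σ => eval X 1 (cob X 0 φ) (c σ))
          (fun σ hσ => by simp only [hξ σ hσ, he, add_zero])]
      exact min_le_left _ _
    · rw [cosys, if_pos rfl,
        cnorm_congr X 0 (f := fun σ => 1 + φ σ) (g := fun σ => eval X 1 (cob X 0 φ) (c σ))
          (fun σ hσ => by simp only [hξ σ hσ, he]; exact add_comm _ _)]
      exact min_le_right _ _
  · have hk0 : k ≠ 0 := by omega
    rw [cosys, if_neg hk0]
    apply Nat.sInf_le
    refine ⟨fun τ => eval X k φ (c τ), ?_⟩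
    apply cnorm_congr
    intro σ hσ
    have hcob : cob X (k - 1) (fun τ => eval X k φ (c τ)) σ
        = ∑ τ ∈ σ.powersetCard k, eval X k φ (c τ) := by
      unfold cob
      rw [filter_faces_eq X hX hk hσ]
    rw [hcob, key_identity X k c φ hhom hσ]
    have flip : ∀ a b : ZMod 2, a + (a + b) = b := by decide
    rw [flip]

lemma cnorm_le_sum (X : Finset (Finset V)) (k : ℕ)
    (c : Finset V → (Finset V → ZMod 2)) (φ : Finset V → ZMod 2) :
    cnorm X k (fun σ => eval X (k + 1) (cob X k φ) (c σ))
      ≤ ∑ π ∈ csupp X (k + 1) (cob X k φ),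
          ((faces X k).filter fun σ => c σ π ≠ 0).card := by
  unfold cnorm
  refine le_trans (Finset.card_le_card ?_) (Finset.card_biUnion_le)
  intro σ hσ
  simp only [csupp, Finset.mem_filter] at hσ
  obtain ⟨hσf, hσne⟩ := hσ
  unfold eval at hσne
  obtain ⟨π, hπ, hne⟩ := Finset.exists_ne_zero_of_sum_ne_zero hσne
  rw [Finset.mem_biUnion]
  refine ⟨π, ?_, ?_⟩
  · simp only [csupp, Finset.mem_filter]
    exact ⟨hπ, fun h => hne (by rw [h, zero_mul])⟩
  · simp only [Finset.mem_filter]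
    exact ⟨hσf, fun h => hne (by rw [h, mul_zero])⟩

end Helpers

/-- **Lower bound on expansion via cochain homotopy**, weighted version: if the chains
`c s σ` form a chain homotopy between the identity and the zero map (in the reduced
setting, where the faces of a vertex include the empty face), then every `k`-cochain `φ`
satisfies `‖φ‖_csy ≤ (max_τ E[δ_s(τ)]) ⬝ ‖d_k φ‖`; in particular
`h^k(X) ≥ (max_τ E[δ_s(τ)])⁻¹`. -/
theorem homotopy_lower_bound {V : Type*} [DecidableEq V]
    (X : Finset (Finset V)) (hX : IsComplex X) (k : ℕ)
    (hne : (faces X (k + 1)).Nonempty)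
    {S : Type*} [Fintype S] (μ : S → ℝ)
    (hμ0 : ∀ s, 0 ≤ μ s) (hμ1 : ∑ s, μ s = 1)
    (c : S → Finset V → (Finset V → ZMod 2))
    (hhom : ∀ s, ∀ σ ∈ faces X k, ∀ ρ ∈ faces X k,
      bdry X (k + 1) (c s σ) ρ =
        (if ρ = σ then 1 else 0) + ∑ τ ∈ σ.powersetCard k, c s τ ρ) :
    (∀ φ : Finset V → ZMod 2,
        (cosys X k φ : ℝ) ≤
          ((faces X (k + 1)).sup' hne fun τ =>
              ∑ s, μ s * (((faces X k).filter fun σ => c s σ τ ≠ 0).card : ℝ)) *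
            (cnorm X (k + 1) (cob X k φ) : ℝ)) ∧
      (ENNReal.ofReal ((faces X (k + 1)).sup' hne fun τ =>
          ∑ s, μ s * (((faces X k).filter fun σ => c s σ τ ≠ 0).card : ℝ)))⁻¹ ≤
        cheeger X k := by
  set M : ℝ := (faces X (k + 1)).sup' hne fun τ =>
      ∑ s, μ s * (((faces X k).filter fun σ => c s σ τ ≠ 0).card : ℝ) with hM
  have part1 : ∀ φ : Finset V → ZMod 2,
      (cosys X k φ : ℝ) ≤ M * (cnorm X (k + 1) (cob X k φ) : ℝ) := by
    intro φ
    have hs : ∀ s, (cosys X k φ : ℝ) ≤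
        ∑ π ∈ csupp X (k + 1) (cob X k φ),
          (((faces X k).filter fun σ => c s σ π ≠ 0).card : ℝ) := by
      intro s
      have h1 := cosys_le X hX k (c s) φ (hhom s)
      have h2 := cnorm_le_sum X k (c s) φ
      have := le_trans h1 h2
      calc (cosys X k φ : ℝ) ≤ ((∑ π ∈ csupp X (k + 1) (cob X k φ),
            ((faces X k).filter fun σ => c s σ π ≠ 0).card : ℕ) : ℝ) := by
              exact_mod_cast this
        _ = _ := by push_cast; ring
    calc (cosys X k φ : ℝ) = ∑ s, μ s * (cosys X k φ : ℝ) := by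
          rw [← Finset.sum_mul, hμ1, one_mul]
      _ ≤ ∑ s, μ s * ∑ π ∈ csupp X (k + 1) (cob X k φ),
            (((faces X k).filter fun σ => c s σ π ≠ 0).card : ℝ) := by
          apply Finset.sum_le_sum
          intro s _
          exact mul_le_mul_of_nonneg_left (hs s) (hμ0 s)
      _ = ∑ π ∈ csupp X (k + 1) (cob X k φ),
            ∑ s, μ s * (((faces X k).filter fun σ => c s σ π ≠ 0).card : ℝ) := by
          simp only [Finset.mul_sum]
          exact Finset.sum_comm
      _ ≤ ∑ _π ∈ csupp X (k + 1) (cob X k φ), M := by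
          apply Finset.sum_le_sum
          intro π hπ
          exact Finset.le_sup'
            (fun τ => ∑ s, μ s * (((faces X k).filter fun σ => c s σ τ ≠ 0).card : ℝ))
            (Finset.filter_subset _ _ hπ)
      _ = M * (cnorm X (k + 1) (cob X k φ) : ℝ) := by
          rw [Finset.sum_const, cnorm, nsmul_eq_mul, mul_comm]
  refine ⟨part1, ?_⟩
  apply le_sInf
  rintro r ⟨φ, hpos, rfl⟩
  have hreal := part1 φ
  have hc0 : (0 : ℝ) < (cosys X k φ : ℝ) := by exact_mod_cast hpos
  have hMpos : 0 < M := by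
    by_contra h
    push_neg at h
    have : M * (cnorm X (k + 1) (cob X k φ) : ℝ) ≤ 0 :=
      mul_nonpos_of_nonpos_of_nonneg h (Nat.cast_nonneg _)
    linarith
  have hd : (cosys X k φ : ENNReal) ≤ ENNReal.ofReal M * (cnorm X (k + 1) (cob X k φ)) := by
    calc (cosys X k φ : ENNReal) = ENNReal.ofReal (cosys X k φ : ℝ) := by
          rw [ENNReal.ofReal_natCast]
      _ ≤ ENNReal.ofReal (M * (cnorm X (k + 1) (cob X k φ) : ℝ)) :=
          ENNReal.ofReal_le_ofReal hreal
      _ = ENNReal.ofReal M * ENNReal.ofReal ((cnorm X (k + 1) (cob X k φ) : ℝ)) := by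
          rw [ENNReal.ofReal_mul hMpos.le]
      _ = ENNReal.ofReal M * (cnorm X (k + 1) (cob X k φ)) := by
          rw [ENNReal.ofReal_natCast]
  rw [ENNReal.le_div_iff_mul_le (Or.inl (by exact_mod_cast hpos.ne'))
    (Or.inl (ENNReal.natCast_ne_top _))]
  calc (ENNReal.ofReal M)⁻¹ * (cosys X k φ : ENNReal)
      ≤ (ENNReal.ofReal M)⁻¹ * (ENNReal.ofReal M * (cnorm X (k + 1) (cob X k φ))) :=
        mul_le_mul_right hd _
    _ = (cnorm X (k + 1) (cob X k φ) : ENNReal) := by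
        rw [← mul_assoc, ENNReal.inv_mul_cancel (by simp [hMpos]) ENNReal.ofReal_ne_top,
          one_mul]
end

section
/- Let X be a finite abstract simplicial complex and k ≥ 0 with X(k+1) ≠ ∅, and let S be a finite nonempty index set. Suppose that for every s ∈ S and σ ∈ X(k) a (k+1)-chain c_{s,σ} of X over Z/2 is given, and for every s ∈ S and τ ∈ X(k−1) a k-chain c_{s,τ} is given, such that for every (s, σ): ∂_{k+1} c_{s,σ} = 1_σ + Σ_{j=0}^{k} c_{s,σ_j}, where σ_0, …, σ_k are the (k−1)-dimensional faces of σ and 1_σ is the indicator k-chain of σ. For τ ∈ X(k+1) set δ(τ) = |{(s, σ) ∈ S × X(k) : c_{s,σ}(τ) ≠ 0}|. Then h^k(X) ≥ |S| / (max_{τ ∈ X(k+1)} δ(τ)); equivalently, every k-cochain φ of X satisfies |S| · ‖φ‖_csy ≤ (max_{τ ∈ X(k+1)} δ(τ)) · ‖d_kφ‖. -/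
open Finset

section Aux

variable {V : Type*} [DecidableEq V]

lemma eval_cob_eq (X : Finset (Finset V)) (k : ℕ) (φ d : Finset V → ZMod 2) :
    eval X (k+1) (cob X k φ) d = ∑ ρ ∈ faces X k, φ ρ * bdry X (k+1) d ρ := by
  unfold eval cob bdry
  simp only [sum_mul, mul_sum, sum_filter]
  rw [Finset.sum_comm]
  simp [ite_mul, mul_ite]

lemma theta_formula (X : Finset (Finset V)) (k : ℕ)
    {S : Type*} (c : S → Finset V → (Finset V → ZMod 2))
    (hhom : ∀ s, ∀ σ ∈ faces X k, ∀ ρ ∈ faces X k,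
      bdry X (k + 1) (c s σ) ρ =
        (if ρ = σ then 1 else 0) + ∑ τ ∈ σ.powersetCard k, c s τ ρ)
    (φ : Finset V → ZMod 2) (s : S) {σ : Finset V} (hσ : σ ∈ faces X k) :
    eval X (k+1) (cob X k φ) (c s σ) =
      φ σ + ∑ τ ∈ σ.powersetCard k, eval X k φ (c s τ) := by
  rw [eval_cob_eq]
  rw [Finset.sum_congr rfl (fun ρ hρ => by rw [hhom s σ hσ ρ hρ])]
  simp only [mul_add, mul_sum, Finset.sum_add_distrib, mul_ite, mul_one, mul_zero]
  rw [Finset.sum_ite_eq' (faces X k) σ φ, if_pos hσ, Finset.sum_comm]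
  rfl

lemma claimA (X : Finset (Finset V)) (hX : IsComplex X) (k : ℕ)
    {S : Type*} (c : S → Finset V → (Finset V → ZMod 2))
    (hhom : ∀ s, ∀ σ ∈ faces X k, ∀ ρ ∈ faces X k,
      bdry X (k + 1) (c s σ) ρ =
        (if ρ = σ then 1 else 0) + ∑ τ ∈ σ.powersetCard k, c s τ ρ)
    (φ : Finset V → ZMod 2) (s : S) :
    cosys X k φ ≤ ((faces X k).filter
      (fun σ => eval X (k+1) (cob X k φ) (c s σ) ≠ 0)).card := by
  rcases Nat.eq_zero_or_pos k with hk | hk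
  · subst hk
    have hform : ∀ σ ∈ faces X 0,
        eval X 1 (cob X 0 φ) (c s σ) = φ σ + eval X 0 φ (c s ∅) := by
      intro σ hσ
      rw [theta_formula X 0 c hhom φ s hσ, Finset.powersetCard_zero, Finset.sum_singleton]
    rcases (by decide : ∀ x : ZMod 2, x = 0 ∨ x = 1) (eval X 0 φ (c s ∅)) with h | h
    · have : ((faces X 0).filter
          (fun σ => eval X 1 (cob X 0 φ) (c s σ) ≠ 0)) = csupp X 0 φ := by
        apply Finset.filter_congr
        intro σ hσ
        rw [hform σ hσ, h, add_zero]
      rw [this]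
      simp only [cosys, if_pos rfl]
      exact min_le_left _ _
    · have : ((faces X 0).filter
          (fun σ => eval X 1 (cob X 0 φ) (c s σ) ≠ 0))
          = csupp X 0 (fun σ => 1 + φ σ) := by
        apply Finset.filter_congr
        intro σ hσ
        rw [hform σ hσ, h, add_comm]
      rw [this]
      simp only [cosys, if_pos rfl]
      exact min_le_right _ _
  · have hk0 : k ≠ 0 := hk.ne'
    set ψ : Finset V → ZMod 2 := fun τ => eval X k φ (c s τ) with hψ
    have hcob : ∀ σ ∈ faces X k, cob X (k-1) ψ σ = ∑ τ ∈ σ.powersetCard k, ψ τ := by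
      intro σ hσ
      have hσX : σ ∈ X := (Finset.mem_filter.mp hσ).1
      unfold cob
      congr 1
      ext τ
      simp only [Finset.mem_filter, Finset.mem_powersetCard, faces]
      constructor
      · rintro ⟨⟨hτX, hτc⟩, hsub⟩
        exact ⟨hsub, by omega⟩
      · rintro ⟨hsub, hcard⟩
        have hτne : τ.Nonempty := Finset.card_pos.mp (by omega)
        exact ⟨⟨hX.2 σ hσX τ hsub hτne, by omega⟩, hsub⟩
    rw [cosys, if_neg hk0]
    refine le_trans (Nat.sInf_le ⟨ψ, rfl⟩) (le_of_eq ?_)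
    unfold cnorm csupp
    congr 1
    apply Finset.filter_congr
    intro σ hσ
    show (φ σ + cob X (k - 1) ψ σ ≠ 0) ↔ _
    rw [hcob σ hσ, theta_formula X k c hhom φ s hσ]

end Aux

/-- **Lower bound on expansion via cochain homotopy**, uniform version: with
`δ(τ) = |{(s,σ) : τ ∈ supp (c s σ)}|`, every `k`-cochain `φ` satisfies
`|S| ⬝ ‖φ‖_csy ≤ (max_τ δ(τ)) ⬝ ‖d_k φ‖`; in particular
`h^k(X) ≥ |S| / max_τ δ(τ)`. -/
theorem homotopy_lower_bound_uniform {V : Type*} [DecidableEq V]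
    (X : Finset (Finset V)) (hX : IsComplex X) (k : ℕ)
    (hne : (faces X (k + 1)).Nonempty)
    {S : Type*} [Fintype S] [Nonempty S]
    (c : S → Finset V → (Finset V → ZMod 2))
    (hhom : ∀ s, ∀ σ ∈ faces X k, ∀ ρ ∈ faces X k,
      bdry X (k + 1) (c s σ) ρ =
        (if ρ = σ then 1 else 0) + ∑ τ ∈ σ.powersetCard k, c s τ ρ) :
    (∀ φ : Finset V → ZMod 2,
        Fintype.card S * cosys X k φ ≤
          ((faces X (k + 1)).sup fun τ =>
              (((Finset.univ : Finset S) ×ˢ faces X k).filter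
                fun p => c p.1 p.2 τ ≠ 0).card) *
            cnorm X (k + 1) (cob X k φ)) ∧
      (Fintype.card S : ENNReal) /
          (((faces X (k + 1)).sup fun τ =>
            (((Finset.univ : Finset S) ×ˢ faces X k).filter
              fun p => c p.1 p.2 τ ≠ 0).card : ℕ) : ENNReal) ≤
        cheeger X k := by
  classical
  set D := ((faces X (k + 1)).sup fun τ =>
      (((Finset.univ : Finset S) ×ˢ faces X k).filter
        fun p => c p.1 p.2 τ ≠ 0).card) with hD
  have main : ∀ φ : Finset V → ZMod 2,
      Fintype.card S * cosys X k φ ≤ D * cnorm X (k+1) (cob X k φ) := by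
    intro φ
    set θ : S → Finset V → ZMod 2 := fun s σ => eval X (k+1) (cob X k φ) (c s σ) with hθ
    have h1 : ∀ s, cosys X k φ ≤ ((faces X k).filter (fun σ => θ s σ ≠ 0)).card :=
      fun s => claimA X hX k c hhom φ s
    have h2 : Fintype.card S * cosys X k φ ≤
        ∑ s : S, ((faces X k).filter (fun σ => θ s σ ≠ 0)).card := by
      calc Fintype.card S * cosys X k φ = ∑ _s : S, cosys X k φ := by
            rw [Finset.sum_const, smul_eq_mul, Finset.card_univ]
        _ ≤ _ := Finset.sum_le_sum fun s _ => h1 s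
    set T := (((Finset.univ : Finset S) ×ˢ faces X k).filter
        fun p => θ p.1 p.2 ≠ 0) with hT
    have h3 : ∑ s : S, ((faces X k).filter (fun σ => θ s σ ≠ 0)).card = T.card := by
      rw [hT, Finset.card_filter, Finset.sum_product]
      simp [Finset.card_filter]
    have hex : ∀ p : S × Finset V, θ p.1 p.2 ≠ 0 →
        ∃ η ∈ csupp X (k+1) (cob X k φ), c p.1 p.2 η ≠ 0 := by
      intro p hp
      by_contra h
      push_neg at h
      apply hp
      rw [hθ]
      apply Finset.sum_eq_zero
      intro η hη
      by_cases h0 : cob X k φ η = 0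
      · rw [h0, zero_mul]
      · rw [h η (Finset.mem_filter.mpr ⟨hη, h0⟩), mul_zero]
    set f : S × Finset V → Finset V := fun p =>
      if h : ∃ η ∈ csupp X (k+1) (cob X k φ), c p.1 p.2 η ≠ 0 then h.choose else ∅
      with hf
    have hfmem : ∀ p ∈ T, f p ∈ csupp X (k+1) (cob X k φ) := by
      intro p hp
      have := hex p (Finset.mem_filter.mp hp).2
      rw [hf]
      simp only [dif_pos this]
      exact this.choose_spec.1
    have hfne : ∀ p ∈ T, c p.1 p.2 (f p) ≠ 0 := by
      intro p hp
      have := hex p (Finset.mem_filter.mp hp).2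
      rw [hf]
      simp only [dif_pos this]
      exact this.choose_spec.2
    have h4 : T.card = ∑ η ∈ csupp X (k+1) (cob X k φ),
        (T.filter (fun p => f p = η)).card :=
      Finset.card_eq_sum_card_fiberwise hfmem
    have h5 : ∀ η ∈ csupp X (k+1) (cob X k φ),
        (T.filter (fun p => f p = η)).card ≤ D := by
      intro η hη
      have hsub : T.filter (fun p => f p = η) ⊆
          (((Finset.univ : Finset S) ×ˢ faces X k).filter
            fun p => c p.1 p.2 η ≠ 0) := by
        intro p hp
        rcases Finset.mem_filter.mp hp with ⟨hpT, hpf⟩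
        refine Finset.mem_filter.mpr ⟨(Finset.mem_filter.mp hpT).1, ?_⟩
        rw [← hpf]
        exact hfne p hpT
      refine le_trans (Finset.card_le_card hsub) ?_
      rw [hD]
      exact Finset.le_sup (f := fun τ => (((Finset.univ : Finset S) ×ˢ faces X k).filter
        fun p => c p.1 p.2 τ ≠ 0).card) (Finset.filter_subset _ _ hη)
    calc Fintype.card S * cosys X k φ
        ≤ T.card := by rw [← h3]; exact h2
      _ ≤ ∑ _η ∈ csupp X (k+1) (cob X k φ), D := by
          rw [h4]; exact Finset.sum_le_sum h5
      _ = D * cnorm X (k+1) (cob X k φ) := by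
          rw [Finset.sum_const, smul_eq_mul, mul_comm]; rfl
  refine ⟨main, ?_⟩
  apply le_sInf
  rintro r ⟨φ, hpos, rfl⟩
  have h := main φ
  have hS : 0 < Fintype.card S := Fintype.card_pos
  have hDne : D ≠ 0 := by
    intro h0
    rw [h0, zero_mul] at h
    have : cosys X k φ = 0 := by
      rcases Nat.mul_eq_zero.mp (Nat.le_zero.mp h) with h' | h'
      · omega
      · exact h'
    omega
  have hD0 : (D : ENNReal) ≠ 0 := by exact_mod_cast hDne
  have hDt : (D : ENNReal) ≠ ⊤ := ENNReal.natCast_ne_top D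
  have hC0 : ((cosys X k φ : ℕ) : ENNReal) ≠ 0 := Nat.cast_ne_zero.mpr hpos.ne'
  have hCt : ((cosys X k φ : ℕ) : ENNReal) ≠ ⊤ := ENNReal.natCast_ne_top _
  rw [ENNReal.div_le_iff hD0 hDt, ← ENNReal.mul_le_mul_iff_left hC0 hCt,
    mul_right_comm, ENNReal.div_mul_cancel hC0 hCt]
  have h' : Fintype.card S * cosys X k φ ≤ cnorm X (k+1) (cob X k φ) * D := by
    rw [mul_comm (cnorm X (k+1) (cob X k φ)) D]; exact h
  exact_mod_cast h'
end

section
/- Alexander duality for expansion: Let V be a finite set with |V| = n, let Δ_V be the complex of all subsets of V (including the empty face ∅ and V itself, faces graded by dim σ = |σ| − 1), and let Y ⊆ X ⊆ Δ_V be subcomplexes (families of subsets of V closed under taking subsets). Then for every 0 ≤ k ≤ n − 1, h_k(X, Y) = h^{n−k−2}(Y^∨, X^∨), where Z^∨ = {σ ⊆ V : V∖σ ∉ Z} is the Alexander dual of a subcomplex Z ⊆ Δ_V (both sides being +∞ if the respective minimum is over the empty set). -/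
open Finset

section Relative

variable {V : Type*} [DecidableEq V] [Fintype V]

/-- The `k`-dimensional relative faces `X(k) ∖ Y(k)` of a pair `Y ⊆ X` of subcomplexes of
the full complex of all subsets of `V`; the dimension `k : ℤ` of a face `σ` is `|σ| - 1`,
so the empty face has dimension `-1`. -/
def rfaces (X Y : Finset (Finset V)) (k : ℤ) : Finset (Finset V) :=
  (X \ Y).filter fun σ => (σ.card : ℤ) = k + 1

/-- The norm of a relative `k`-(co)chain of the pair `(X, Y)`. -/
def rnorm (X Y : Finset (Finset V)) (k : ℤ) (c : Finset V → ZMod 2) : ℕ :=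
  ((rfaces X Y k).filter fun σ => c σ ≠ 0).card

/-- The relative boundary of a relative `k`-chain, as a relative `(k-1)`-chain. -/
def rbdry (X Y : Finset (Finset V)) (k : ℤ) (c : Finset V → ZMod 2) :
    Finset V → ZMod 2 :=
  fun τ => ∑ σ ∈ (rfaces X Y k).filter (fun σ => τ ⊆ σ), c σ

/-- The relative systolic norm of a relative `k`-chain. -/
noncomputable def rsys (X Y : Finset (Finset V)) (k : ℤ) (c : Finset V → ZMod 2) : ℕ :=
  sInf {m | ∃ c' : Finset V → ZMod 2,
    m = rnorm X Y k fun σ => c σ + rbdry X Y (k + 1) c' σ}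

/-- The `k`-th homological Cheeger constant `h_k(X, Y)` of the pair, valued in `ℝ≥0∞`
(with `sInf ∅ = ⊤`, i.e. a minimum over the empty set equals `+∞`). -/
noncomputable def hRel (X Y : Finset (Finset V)) (k : ℤ) : ENNReal :=
  sInf {r : ENNReal | ∃ c : Finset V → ZMod 2, 0 < rsys X Y k c ∧
    r = (rnorm X Y (k - 1) (rbdry X Y k c) : ENNReal) / (rsys X Y k c : ENNReal)}

/-- The relative coboundary of a relative `k`-cochain, as a relative `(k+1)`-cochain. -/
def rcob (X Y : Finset (Finset V)) (k : ℤ) (φ : Finset V → ZMod 2) :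
    Finset V → ZMod 2 :=
  fun τ => ∑ σ ∈ (rfaces X Y k).filter (fun σ => σ ⊆ τ), φ σ

/-- The relative cosystolic norm of a relative `k`-cochain. -/
noncomputable def rcosys (X Y : Finset (Finset V)) (k : ℤ) (φ : Finset V → ZMod 2) : ℕ :=
  sInf {m | ∃ ψ : Finset V → ZMod 2,
    m = rnorm X Y k fun τ => φ τ + rcob X Y (k - 1) ψ τ}

/-- The `k`-th cohomological Cheeger constant `h^k(X, Y)` of the pair, valued in `ℝ≥0∞`
(with `sInf ∅ = ⊤`, i.e. a minimum over the empty set equals `+∞`). -/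
noncomputable def hRelCo (X Y : Finset (Finset V)) (k : ℤ) : ENNReal :=
  sInf {r : ENNReal | ∃ φ : Finset V → ZMod 2, 0 < rcosys X Y k φ ∧
    r = (rnorm X Y (k + 1) (rcob X Y k φ) : ENNReal) / (rcosys X Y k φ : ENNReal)}

/-- The Alexander dual `Z^∨ = {σ ⊆ V : V ∖ σ ∉ Z}` of a subcomplex `Z`. -/
def dualC (Z : Finset (Finset V)) : Finset (Finset V) :=
  Finset.univ.filter fun σ : Finset V => σᶜ ∉ Z

end Relative


section DualLemmas

variable {V : Type*} [DecidableEq V] [Fintype V] (X Y : Finset (Finset V))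

lemma mem_rfaces_dual {m d : ℤ} (hd : d = (Fintype.card V : ℤ) - m - 2)
    {σ : Finset V} :
    σ ∈ rfaces (dualC Y) (dualC X) d ↔ σᶜ ∈ rfaces X Y m := by
  have hcard : σ.card + σᶜ.card = Fintype.card V := by
    simpa using σ.card_add_card_compl
  simp only [rfaces, dualC, Finset.mem_filter, Finset.mem_sdiff, Finset.mem_univ,
    true_and, not_not, compl_compl]
  constructor
  · rintro ⟨⟨h1, h2⟩, h3⟩
    exact ⟨⟨h2, h1⟩, by omega⟩
  · rintro ⟨⟨h1, h2⟩, h3⟩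
    exact ⟨⟨h2, h1⟩, by omega⟩

lemma rnorm_dual {m d : ℤ} (hd : d = (Fintype.card V : ℤ) - m - 2)
    (c : Finset V → ZMod 2) :
    rnorm (dualC Y) (dualC X) d (fun σ => c σᶜ) = rnorm X Y m c := by
  unfold rnorm
  apply Finset.card_bij (fun σ _ => σᶜ)
  · intro σ hσ
    simp only [Finset.mem_filter] at hσ ⊢
    exact ⟨(mem_rfaces_dual X Y hd).mp hσ.1, hσ.2⟩
  · intro a ha b hb h
    exact compl_injective h
  · intro τ hτ
    simp only [Finset.mem_filter] at hτ
    refine ⟨τᶜ, ?_, compl_compl τ⟩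
    simp only [Finset.mem_filter]
    exact ⟨(mem_rfaces_dual X Y hd).mpr (by simpa using hτ.1), by simpa using hτ.2⟩

lemma rcob_dual {m d : ℤ} (hd : d = (Fintype.card V : ℤ) - m - 2)
    (c : Finset V → ZMod 2) (τ : Finset V) :
    rcob (dualC Y) (dualC X) d (fun σ => c σᶜ) τ = rbdry X Y m c τᶜ := by
  unfold rcob rbdry
  apply Finset.sum_bij (fun σ _ => σᶜ)
  · intro σ hσ
    simp only [Finset.mem_filter] at hσ ⊢
    exact ⟨(mem_rfaces_dual X Y hd).mp hσ.1, compl_subset_compl.mpr hσ.2⟩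
  · intro a ha b hb h
    exact compl_injective h
  · intro τ' hτ'
    simp only [Finset.mem_filter] at hτ'
    refine ⟨τ'ᶜ, ?_, compl_compl τ'⟩
    simp only [Finset.mem_filter]
    refine ⟨(mem_rfaces_dual X Y hd).mpr (by simpa using hτ'.1), ?_⟩
    have h2 := compl_subset_compl.mpr hτ'.2
    simpa using h2
  · intro σ hσ
    rfl

lemma rnorm_key {m d : ℤ} (hd : d = (Fintype.card V : ℤ) - m - 2)
    (c ψ : Finset V → ZMod 2) :
    rnorm (dualC Y) (dualC X) d
        (fun τ => c τᶜ + rcob (dualC Y) (dualC X) (d - 1) ψ τ)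
      = rnorm X Y m (fun σ => c σ + rbdry X Y (m + 1) (fun σ => ψ σᶜ) σ) := by
  have h1 : d - 1 = (Fintype.card V : ℤ) - (m + 1) - 2 := by omega
  have e : (fun τ => c τᶜ + rcob (dualC Y) (dualC X) (d - 1) ψ τ)
      = fun τ => (fun σ => c σ + rbdry X Y (m + 1) (fun σ => ψ σᶜ) σ) τᶜ := by
    funext τ
    have h2 := rcob_dual X Y h1 (fun σ => ψ σᶜ) τ
    simp only [compl_compl] at h2
    rw [h2]
  rw [e]
  exact rnorm_dual X Y hd (fun σ => c σ + rbdry X Y (m + 1) (fun σ => ψ σᶜ) σ)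

lemma rcosys_dual {m d : ℤ} (hd : d = (Fintype.card V : ℤ) - m - 2)
    (c : Finset V → ZMod 2) :
    rcosys (dualC Y) (dualC X) d (fun σ => c σᶜ) = rsys X Y m c := by
  unfold rcosys rsys
  congr 1
  ext r
  constructor
  · rintro ⟨ψ, rfl⟩
    exact ⟨fun σ => ψ σᶜ, rnorm_key X Y hd c ψ⟩
  · rintro ⟨c', rfl⟩
    have h := rnorm_key X Y hd c (fun σ => c' σᶜ)
    simp only [compl_compl] at h
    exact ⟨fun σ => c' σᶜ, h.symm⟩

end DualLemmas

/-- **Alexander duality for expansion**: for subcomplexes `Y ⊆ X` of the full complex on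
an `n`-element vertex set and `0 ≤ k ≤ n - 1`, `h_k(X, Y) = h^{n-k-2}(Y^∨, X^∨)`. -/
theorem alexander_duality_expansion {V : Type*} [DecidableEq V] [Fintype V]
    (n : ℕ) (hn : Fintype.card V = n)
    (X Y : Finset (Finset V))
    (hXc : ∀ σ ∈ X, ∀ τ ⊆ σ, τ ∈ X) (hYc : ∀ σ ∈ Y, ∀ τ ⊆ σ, τ ∈ Y)
    (hYX : Y ⊆ X) (k : ℕ) (hk : k + 1 ≤ n) :
    hRel X Y (k : ℤ) = hRelCo (dualC Y) (dualC X) ((n : ℤ) - k - 2) := by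
  subst hn
  unfold hRel hRelCo
  congr 1
  ext r
  have hd : ((Fintype.card V : ℤ) - (k : ℤ) - 2) = (Fintype.card V : ℤ) - (k : ℤ) - 2 := rfl
  have hd1 : ((Fintype.card V : ℤ) - (k : ℤ) - 2) + 1
      = (Fintype.card V : ℤ) - ((k : ℤ) - 1) - 2 := by ring
  constructor
  · rintro ⟨c, hpos, rfl⟩
    refine ⟨fun σ => c σᶜ, ?_, ?_⟩
    · rw [rcosys_dual X Y hd c]; exact hpos
    · have hcob : rcob (dualC Y) (dualC X) ((Fintype.card V : ℤ) - (k : ℤ) - 2)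
            (fun σ => c σᶜ)
          = fun τ => rbdry X Y (k : ℤ) c τᶜ := funext (rcob_dual X Y hd c)
      rw [hcob, rnorm_dual X Y hd1 (rbdry X Y (k : ℤ) c), rcosys_dual X Y hd c]
  · rintro ⟨φ, hpos, rfl⟩
    refine ⟨fun σ => φ σᶜ, ?_, ?_⟩
    · have h := rcosys_dual X Y hd (fun σ => φ σᶜ)
      simp only [compl_compl] at h
      rw [← h]; exact hpos
    · have hφ : (fun σ => (fun σ => φ σᶜ) σᶜ) = φ := by
        funext σ; simp
      have hcob : rcob (dualC Y) (dualC X) ((Fintype.card V : ℤ) - (k : ℤ) - 2) φ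
          = fun τ => rbdry X Y (k : ℤ) (fun σ => φ σᶜ) τᶜ := by
        conv_lhs => rw [← hφ]
        exact funext (rcob_dual X Y hd (fun σ => φ σᶜ))
      have hsys : rcosys (dualC Y) (dualC X) ((Fintype.card V : ℤ) - (k : ℤ) - 2) φ
          = rsys X Y (k : ℤ) (fun σ => φ σᶜ) := by
        conv_lhs => rw [← hφ]
        exact rcosys_dual X Y hd (fun σ => φ σᶜ)
      rw [hcob, rnorm_dual X Y hd1 (rbdry X Y (k : ℤ) (fun σ => φ σᶜ)), hsys]
end

section
/- Let G be a finite connected simple graph and let F be a spanning subgraph of G such that 2·|E(C) ∩ E(F)| ≤ |E(C)| for every Eulerian subgraph C of G. Then: (i) F contains no cycle (F is a forest); and (ii) for any two vertices u, v lying in the same connected component of F, the distance between u and v in F equals their distance in G; in particular, every path in F has length at most diam(G). -/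
open SimpleGraph Finset

open scoped symmDiff

private lemma card_symmDiff_add {α : Type*} [DecidableEq α] (A B : Finset α) :
    (A ∆ B).card + 2 * (A ∩ B).card = A.card + B.card := by
  have h1 : (A ∆ B) = (A \ B) ∪ (B \ A) := rfl
  have hd : Disjoint (A \ B) (B \ A) := by
    apply Finset.disjoint_left.mpr
    intro x hx hx'
    simp only [Finset.mem_sdiff] at hx hx'
    exact hx.2 hx'.1
  have h2 : (A ∆ B).card = (A \ B).card + (B \ A).card := by
    rw [h1, Finset.card_union_of_disjoint hd]
  have h3 : (A \ B).card + (A ∩ B).card = A.card := Finset.card_sdiff_add_card_inter A B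
  have h4 : (B \ A).card + (B ∩ A).card = B.card := Finset.card_sdiff_add_card_inter B A
  have h5 : (B ∩ A).card = (A ∩ B).card := by rw [Finset.inter_comm]
  omega

private lemma ncard_neighborSet_fromEdgeSet {V : Type*} [Fintype V] [DecidableEq V]
    (S : Finset (Sym2 V)) (hS : ∀ e ∈ S, ¬ e.IsDiag) (v : V) :
    ((SimpleGraph.fromEdgeSet (S : Set (Sym2 V))).neighborSet v).ncard
      = (S.filter (fun e => v ∈ e)).card := by
  classical
  have h1 : (SimpleGraph.fromEdgeSet (S : Set (Sym2 V))).neighborSet v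
      = ↑(Finset.univ.filter fun w => s(v,w) ∈ S ∧ v ≠ w) := by
    ext w
    simp [SimpleGraph.fromEdgeSet_adj, SimpleGraph.neighborSet]
  rw [h1, Set.ncard_coe_finset]
  apply Finset.card_bij (fun w _ => s(v, w))
  · intro w hw
    simp only [Finset.mem_filter, Finset.mem_univ, true_and] at hw ⊢
    exact ⟨hw.1, Sym2.mem_mk_left v w⟩
  · intro a ha b hb hab
    exact Sym2.congr_right.mp hab
  · intro e he
    simp only [Finset.mem_filter] at he
    obtain ⟨w, rfl⟩ := Sym2.mem_iff_exists.mp he.2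
    refine ⟨w, ?_, rfl⟩
    simp only [Finset.mem_filter, Finset.mem_univ, true_and]
    refine ⟨he.1, fun hvw => hS _ he.1 ?_⟩
    rw [hvw]
    exact Sym2.mk_isDiag_iff.mpr rfl

private lemma filter_card_eq_countP {V : Type*} [DecidableEq V] {G : SimpleGraph V}
    {u v : V} {p : G.Walk u v} (hp : p.IsTrail) (x : V) :
    (p.edges.toFinset.filter (fun e => x ∈ e)).card = p.edges.countP (fun e => x ∈ e) := by
  rw [List.countP_eq_length_filter,
    ← List.toFinset_card_of_nodup (hp.edges_nodup.filter _)]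
  congr 1
  ext e
  simp

/-- If `F` is a spanning subgraph of a finite connected graph `G` such that every Eulerian
subgraph `C` of `G` satisfies `2|E(C) ∩ E(F)| ≤ |E(C)|`, then `F` is a forest, distances
within a connected component of `F` agree with distances in `G`, and every path in `F`
has length at most `diam G`. -/
theorem forest_of_eulerian_cut {V : Type*} [Fintype V]
    (G F : SimpleGraph V) (hG : G.Connected) (hFG : F ≤ G)
    (hEuler : ∀ C : SimpleGraph V, C ≤ G →
      (∀ v : V, Even ((C.neighborSet v).ncard)) →
      2 * (C.edgeSet ∩ F.edgeSet).ncard ≤ C.edgeSet.ncard) :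
    F.IsAcyclic ∧
      (∀ u v : V, F.Reachable u v → F.dist u v = G.dist u v) ∧
      ∀ (u v : V) (p : F.Walk u v), p.IsPath → p.length ≤ G.diam := by
  classical
  -- F is acyclic
  have hAcyclic : F.IsAcyclic := by
    intro v c hc
    set Sc : Finset (Sym2 V) := c.edges.toFinset with hSc
    have hScG : ∀ e ∈ Sc, e ∈ F.edgeSet := by
      intro e he
      exact c.edges_subset_edgeSet (List.mem_toFinset.mp he)
    have hndiag : ∀ e ∈ Sc, ¬ e.IsDiag := fun e he =>
      (F.not_isDiag_of_mem_edgeSet (hScG e he))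
    set C := SimpleGraph.fromEdgeSet (Sc : Set (Sym2 V)) with hC
    have hCG : C ≤ G := by
      intro a b hab
      rw [SimpleGraph.fromEdgeSet_adj] at hab
      exact hFG (F.mem_edgeSet.mp (hScG _ hab.1))
    have hCE : ∀ x : V, Even ((C.neighborSet x).ncard) := by
      intro x
      rw [ncard_neighborSet_fromEdgeSet Sc hndiag x, filter_card_eq_countP hc.isTrail x]
      rw [hc.isTrail.even_countP_edges_iff x]
      simp
    have h2 := hEuler C hCG hCE
    have hCe : C.edgeSet = (Sc : Set (Sym2 V)) := by
      rw [hC, SimpleGraph.edgeSet_fromEdgeSet]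
      ext e
      simp only [Set.mem_diff, Set.mem_setOf_eq, Finset.coe_sort_coe, Finset.mem_coe]
      exact ⟨fun h => h.1, fun h => ⟨h, hndiag e h⟩⟩
    have hsub : C.edgeSet ∩ F.edgeSet = (Sc : Set (Sym2 V)) := by
      rw [hCe]
      ext e
      simp only [Set.mem_inter_iff, Finset.mem_coe]
      exact ⟨fun h => h.1, fun h => ⟨h, hScG e h⟩⟩
    rw [hsub, hCe] at h2
    simp only [Set.ncard_coe_finset] at h2
    have hcard0 : Sc.card = 0 := by omega
    have : c.edges = [] := by
      have := Finset.card_eq_zero.mp hcard0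
      rwa [hSc, List.toFinset_eq_empty_iff] at this
    have hlen : c.length = 0 := by
      have h := c.length_edges
      rw [‹c.edges = []›] at h
      simpa using h.symm
    have := hc.three_le_length
    omega
  -- key lemma: any F-path is at most as long as any G-path with same endpoints
  have hkey : ∀ (u v : V) (P : F.Walk u v) (_ : P.IsPath) (Q : G.Walk u v) (_ : Q.IsPath),
      P.length ≤ Q.length := by
    intro u v P hP Q hQ
    set Sp : Finset (Sym2 V) := P.edges.toFinset with hSp
    set Sq : Finset (Sym2 V) := Q.edges.toFinset with hSq
    set S : Finset (Sym2 V) := Sp ∆ Sq with hS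
    have hSpF : ∀ e ∈ Sp, e ∈ F.edgeSet := fun e he =>
      P.edges_subset_edgeSet (List.mem_toFinset.mp he)
    have hSqG : ∀ e ∈ Sq, e ∈ G.edgeSet := fun e he =>
      Q.edges_subset_edgeSet (List.mem_toFinset.mp he)
    have hSG : ∀ e ∈ S, e ∈ G.edgeSet := by
      intro e he
      rcases Finset.mem_symmDiff.mp he with ⟨h1, _⟩ | ⟨h1, _⟩
      · exact SimpleGraph.edgeSet_subset_edgeSet.mpr hFG (hSpF e h1)
      · exact hSqG e h1
    have hndiag : ∀ e ∈ S, ¬ e.IsDiag := fun e he =>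
      G.not_isDiag_of_mem_edgeSet (hSG e he)
    set C := SimpleGraph.fromEdgeSet (S : Set (Sym2 V)) with hC
    have hCG : C ≤ G := by
      intro a b hab
      rw [SimpleGraph.fromEdgeSet_adj] at hab
      exact G.mem_edgeSet.mp (hSG _ hab.1)
    have hCE : ∀ x : V, Even ((C.neighborSet x).ncard) := by
      intro x
      rw [ncard_neighborSet_fromEdgeSet S hndiag x]
      have hfilter : S.filter (fun e => x ∈ e)
          = (Sp.filter (fun e => x ∈ e)) ∆ (Sq.filter (fun e => x ∈ e)) := by
        ext e
        simp only [Finset.mem_filter, Finset.mem_symmDiff, hS]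
        tauto
      rw [hfilter]
      have hp1 : Even ((Sp.filter (fun e => x ∈ e)).card) ↔ (u ≠ v → x ≠ u ∧ x ≠ v) := by
        rw [filter_card_eq_countP hP.isTrail x]
        exact hP.isTrail.even_countP_edges_iff x
      have hq1 : Even ((Sq.filter (fun e => x ∈ e)).card) ↔ (u ≠ v → x ≠ u ∧ x ≠ v) := by
        rw [filter_card_eq_countP hQ.isTrail x]
        exact hQ.isTrail.even_countP_edges_iff x
      have hsum : Even ((Sp.filter (fun e => x ∈ e)).card + (Sq.filter (fun e => x ∈ e)).card) :=
        Nat.even_add.mpr (hp1.trans hq1.symm)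
      have heq := card_symmDiff_add (Sp.filter (fun e => x ∈ e)) (Sq.filter (fun e => x ∈ e))
      rw [← heq] at hsum
      exact (Nat.even_add.mp hsum).mpr (even_two_mul _)
    have h2 := hEuler C hCG hCE
    have hCe : C.edgeSet = (S : Set (Sym2 V)) := by
      rw [hC, SimpleGraph.edgeSet_fromEdgeSet]
      ext e
      simp only [Set.mem_diff, Set.mem_setOf_eq, Finset.mem_coe]
      exact ⟨fun h => h.1, fun h => ⟨h, hndiag e h⟩⟩
    have hsub : ((Sp \ Sq : Finset (Sym2 V)) : Set (Sym2 V)) ⊆ (↑S : Set (Sym2 V)) ∩ F.edgeSet := by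
      intro e he
      rw [Finset.mem_coe, Finset.mem_sdiff] at he
      constructor
      · exact Finset.mem_coe.mpr (Finset.mem_symmDiff.mpr (Or.inl ⟨he.1, he.2⟩))
      · exact hSpF e he.1
    have hfin : ((↑S : Set (Sym2 V)) ∩ F.edgeSet).Finite := Set.toFinite _
    have hle : (Sp \ Sq).card ≤ ((↑S : Set (Sym2 V)) ∩ F.edgeSet).ncard := by
      rw [← Set.ncard_coe_finset]
      exact Set.ncard_le_ncard hsub hfin
    rw [hCe, Set.ncard_coe_finset] at h2
    have hScard : S.card = (Sp \ Sq).card + (Sq \ Sp).card := by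
      rw [hS]
      have hd : Disjoint (Sp \ Sq) (Sq \ Sp) := by
        apply Finset.disjoint_left.mpr
        intro x hx hx'
        simp only [Finset.mem_sdiff] at hx hx'
        exact hx.2 hx'.1
      rw [show (Sp ∆ Sq) = (Sp \ Sq) ∪ (Sq \ Sp) from rfl,
        Finset.card_union_of_disjoint hd]
    have hstep : (Sp \ Sq).card ≤ (Sq \ Sp).card := by omega
    have hcardP : Sp.card = P.length := by
      rw [hSp, List.toFinset_card_of_nodup hP.isTrail.edges_nodup, P.length_edges]
    have hcardQ : Sq.card = Q.length := by
      rw [hSq, List.toFinset_card_of_nodup hQ.isTrail.edges_nodup, Q.length_edges]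
    have h3 : (Sp \ Sq).card + (Sp ∩ Sq).card = Sp.card := Finset.card_sdiff_add_card_inter Sp Sq
    have h4 : (Sq \ Sp).card + (Sq ∩ Sp).card = Sq.card := Finset.card_sdiff_add_card_inter Sq Sp
    have h5 : (Sq ∩ Sp).card = (Sp ∩ Sq).card := by rw [Finset.inter_comm]
    omega
  -- diam boundedness
  have hediam : G.ediam ≠ ⊤ := by
    have hle : G.ediam ≤ (Fintype.card V : ℕ∞) := by
      apply SimpleGraph.ediam_le_of_edist_le
      intro u v
      obtain ⟨w⟩ := hG u v
      calc G.edist u v ≤ (w.bypass.length : ℕ∞) := SimpleGraph.edist_le _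
        _ ≤ (Fintype.card V : ℕ∞) := by
            exact_mod_cast (w.bypass_isPath.length_lt).le
    exact fun h => by simp [h] at hle
  -- distance equality
  have hdist : ∀ u v : V, F.Reachable u v → F.dist u v = G.dist u v := by
    intro u v hr
    obtain ⟨P, hPlen⟩ := hr.exists_walk_length_eq_dist
    obtain ⟨Q, hQlen⟩ := (hG u v).exists_walk_length_eq_dist
    have hle1 : G.dist u v ≤ F.dist u v := by
      rw [← hPlen]
      calc G.dist u v ≤ (P.mapLe hFG).length := SimpleGraph.dist_le _
        _ = P.length := P.length_map _
    have hle2 : F.dist u v ≤ G.dist u v := by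
      have hP' : P.bypass.IsPath := P.bypass_isPath
      have hQ' : Q.bypass.IsPath := Q.bypass_isPath
      calc F.dist u v ≤ P.bypass.length := SimpleGraph.dist_le _
        _ ≤ Q.bypass.length := hkey u v P.bypass hP' Q.bypass hQ'
        _ ≤ Q.length := Q.length_bypass_le
        _ = G.dist u v := hQlen
    omega
  refine ⟨hAcyclic, hdist, ?_⟩
  intro u v p hp
  obtain ⟨w, hwlen⟩ := (p.reachable).exists_walk_length_eq_dist
  have hbp : w.bypass.IsPath := w.bypass_isPath
  have huniq := SimpleGraph.isAcyclic_iff_path_unique.mp hAcyclic (⟨p, hp⟩ : F.Path u v)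
    ⟨w.bypass, hbp⟩
  have hplen : p.length = w.bypass.length := by
    have := congrArg (fun q : F.Path u v => (q : F.Walk u v).length) huniq
    simpa using this
  have hble : w.bypass.length ≤ F.dist u v := hwlen ▸ w.length_bypass_le
  calc p.length ≤ F.dist u v := hplen ▸ hble
    _ = G.dist u v := hdist u v p.reachable
    _ ≤ G.diam := SimpleGraph.dist_le_diam hediam
end

section
/- Combinatorial characterization of codimension-one cosystoles of pseudomanifolds: Let n ≥ 2 and let X be an n-pseudomanifold with H^{n−1}(X; Z/2) = 0. Then an (n−1)-cochain φ of X over Z/2 satisfies ‖φ‖ = ‖φ‖_csy (i.e., φ is a cosystole) if and only if 2·|E(C) ∩ E_φ| ≤ |E(C)| holds for every Eulerian subgraph C of the flip graph G_X. -/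
open Finset

/-- The flip graph of an `n`-dimensional complex: vertices are the `n`-faces, two being
adjacent when they share a common `(n-1)`-face. -/
def flipGraph {V : Type*} [DecidableEq V] (X : Finset (Finset V)) (n : ℕ) :
    SimpleGraph {σ : Finset V // σ ∈ faces X n} where
  Adj σ τ := σ ≠ τ ∧ (σ.1 ∩ τ.1).card = n
  symm := by
    constructor
    rintro σ τ ⟨hne, h⟩
    exact ⟨hne.symm, by rwa [Finset.inter_comm]⟩
  loopless := by constructor; rintro σ ⟨hne, -⟩; exact hne rfl

/-- The predicate on edges of the flip graph saying that the common `(n-1)`-face of the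
two endpoints lies in the support of `φ` (membership in `E_φ`). -/
def edgeInSupp {V : Type*} [DecidableEq V] (X : Finset (Finset V)) (n : ℕ)
    (φ : Finset V → ZMod 2) : Sym2 {σ : Finset V // σ ∈ faces X n} → Prop :=
  Sym2.lift ⟨fun a b => φ (a.1 ∩ b.1) ≠ 0, fun a b => by simp only [Finset.inter_comm]⟩

/-- `X` is an `n`-pseudomanifold: a pure `n`-dimensional finite complex in which every
`(n-1)`-face lies in exactly two `n`-faces, and whose flip graph is connected. -/
def IsPseudomanifold {V : Type*} [DecidableEq V] (X : Finset (Finset V)) (n : ℕ) : Prop :=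
  IsComplex X ∧ (∀ σ ∈ X, ∃ τ ∈ faces X n, σ ⊆ τ) ∧
    (∀ τ ∈ faces X (n - 1), ((faces X n).filter fun σ => τ ⊆ σ).card = 2) ∧
    (flipGraph X n).Connected

/-! Every `(n-1)`-face lies in exactly two `n`-faces, so `commonFace` is a bijection from the
edges of the flip graph onto the `(n-1)`-faces. Subgraphs `C` of the flip graph thus correspond
to `(n-1)`-cochains `z` with `supp z = commonFace '' E(C)`, and then `|E(C)| = ‖z‖`,
`|E(C) ∩ E_φ| = |supp φ ∩ supp z|` and `deg_C v ≡ (δz)(v) (mod 2)`: Eulerian subgraphs are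
the cocycles, i.e. (as `H^{n-1} = 0` and `δδ = 0`) the coboundaries. Since
`‖φ + z‖ = ‖φ‖ + ‖z‖ - 2 |supp φ ∩ supp z|`, `φ` is a cosystole iff
`2 |supp φ ∩ supp z| ≤ ‖z‖` for every coboundary `z`. -/

section Cochains

variable {V : Type*} {X : Finset (Finset V)} {k : ℕ}

lemma csupp_congr {φ φ' : Finset V → ZMod 2} (h : ∀ σ ∈ faces X k, φ σ = φ' σ) :
    csupp X k φ = csupp X k φ' :=
  filter_congr fun σ hσ => by rw [h σ hσ]

lemma cnorm_add_add_two_mul_card_inter [DecidableEq V] (φ z : Finset V → ZMod 2) :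
    cnorm X k (fun τ => φ τ + z τ) + 2 * #(csupp X k φ ∩ csupp X k z) =
      cnorm X k φ + cnorm X k z := by
  have hsupp : csupp X k (fun τ => φ τ + z τ) =
      (csupp X k φ ∪ csupp X k z) \ (csupp X k φ ∩ csupp X k z) := by
    have hxor : ∀ a b : ZMod 2, a + b ≠ 0 ↔ ¬(a ≠ 0 ↔ b ≠ 0) := by decide
    ext σ
    simp only [csupp, mem_filter, mem_sdiff, mem_union, mem_inter, hxor (φ σ) (z σ)]
    tauto
  have hunion := card_union_add_card_inter (csupp X k φ) (csupp X k z)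
  have hsdiff := card_sdiff_of_subset (inter_subset_union (s := csupp X k φ) (t := csupp X k z))
  have hinter := card_le_card (inter_subset_union (s := csupp X k φ) (t := csupp X k z))
  unfold cnorm
  rw [hsupp]
  omega

lemma cnorm_le_cnorm_add_iff [DecidableEq V] (φ z : Finset V → ZMod 2) :
    cnorm X k φ ≤ cnorm X k (fun τ => φ τ + z τ) ↔
      2 * #(csupp X k φ ∩ csupp X k z) ≤ cnorm X k z := by
  have := cnorm_add_add_two_mul_card_inter (X := X) (k := k) φ z
  omega

lemma cnorm_eq_cosys_iff [DecidableEq V] (hk : k ≠ 0) (φ : Finset V → ZMod 2) :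
    cnorm X k φ = cosys X k φ ↔
      ∀ ψ, cnorm X k φ ≤ cnorm X k (fun τ => φ τ + cob X (k - 1) ψ τ) := by
  have hmem : cnorm X k φ ∈
      {m | ∃ ψ, m = cnorm X k fun τ => φ τ + cob X (k - 1) ψ τ} :=
    ⟨0, by simp [cob]⟩
  rw [cosys, if_neg hk]
  refine ⟨fun h ψ => h ▸ Nat.sInf_le ⟨ψ, rfl⟩, fun h => ?_⟩
  exact le_antisymm (le_csInf ⟨_, hmem⟩ fun m ⟨ψ, hm⟩ => hm ▸ h ψ) (Nat.sInf_le hmem)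

lemma cnorm_eq_cosys_iff_forall_coboundary [DecidableEq V] (hk : k ≠ 0)
    (φ : Finset V → ZMod 2) :
    cnorm X k φ = cosys X k φ ↔ ∀ ψ,
      2 * #(csupp X k φ ∩ csupp X k (cob X (k - 1) ψ)) ≤ cnorm X k (cob X (k - 1) ψ) := by
  simp only [cnorm_eq_cosys_iff hk, cnorm_le_cnorm_add_iff]

lemma cob_eq_card_filter_csupp [DecidableEq V] (z : Finset V → ZMod 2) (τ : Finset V) :
    cob X k z τ = (#((csupp X k z).filter (· ⊆ τ)) : ZMod 2) := by
  have h01 : ∀ x : ZMod 2, x = if x ≠ 0 then 1 else 0 := by decide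
  rw [cob, sum_congr rfl fun σ _ => h01 (z σ), sum_boole, csupp, filter_filter, filter_filter]
  simp only [and_comm]

lemma card_faces_between [DecidableEq V] (hX : IsComplex X) {ρ τ : Finset V}
    (hτ : τ ∈ faces X (k + 2)) (hρ : #ρ = k + 1) (hρτ : ρ ⊆ τ) :
    #((faces X (k + 1)).filter fun σ => ρ ⊆ σ ∧ σ ⊆ τ) = 2 := by
  have hτX := (mem_filter.1 hτ).1
  have hτcard := (mem_filter.1 hτ).2
  have heq : ((faces X (k + 1)).filter fun σ => ρ ⊆ σ ∧ σ ⊆ τ) =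
      (τ \ ρ).image (insert · ρ) := by
    ext σ
    simp only [faces, mem_filter, mem_image, mem_sdiff]
    constructor
    · rintro ⟨⟨-, hσ⟩, hρσ, hστ⟩
      obtain ⟨y, hy, rfl⟩ := exists_eq_insert_iff.2 ⟨hρσ, by omega⟩
      exact ⟨y, ⟨hστ (mem_insert_self y ρ), hy⟩, rfl⟩
    · rintro ⟨y, ⟨hyτ, hyρ⟩, rfl⟩
      have hsub : insert y ρ ⊆ τ := insert_subset hyτ hρτ
      refine ⟨⟨hX.2 τ hτX _ hsub (insert_nonempty y ρ), ?_⟩, subset_insert y ρ, hsub⟩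
      rw [card_insert_of_notMem hyρ, hρ]
  rw [heq, card_image_of_injOn fun y hy y' _ h => (insert_inj (mem_sdiff.1 hy).2).1 h,
    card_sdiff_of_subset hρτ]
  omega

lemma cob_cob_eq_zero [DecidableEq V] (hX : IsComplex X) (ψ : Finset V → ZMod 2) {τ : Finset V}
    (hτ : τ ∈ faces X (k + 2)) : cob X (k + 1) (cob X k ψ) τ = 0 := by
  unfold cob
  rw [sum_comm' (t' := (faces X k).filter (· ⊆ τ))
    (s' := fun ρ => (faces X (k + 1)).filter fun σ => ρ ⊆ σ ∧ σ ⊆ τ)]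
  · refine sum_eq_zero fun ρ hρ => ?_
    obtain ⟨hρ, hρτ⟩ := mem_filter.1 hρ
    rw [sum_const, card_faces_between hX hτ (mem_filter.1 hρ).2 hρτ, two_nsmul,
      CharTwo.add_self_eq_zero]
  · intro σ ρ
    simp only [mem_filter]
    constructor
    · rintro ⟨⟨hσ, hστ⟩, hρ, hρσ⟩
      exact ⟨⟨hσ, hρσ, hστ⟩, hρ, hρσ.trans hστ⟩
    · rintro ⟨⟨hσ, hρσ, hστ⟩, hρ, -⟩
      exact ⟨⟨hσ, hστ⟩, hρ, hρσ⟩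

end Cochains

section FlipGraph

variable {V : Type*} [DecidableEq V] {X : Finset (Finset V)} {n : ℕ}

def IsThin (X : Finset (Finset V)) (n : ℕ) : Prop :=
  ∀ τ ∈ faces X (n - 1), #((faces X n).filter fun σ => τ ⊆ σ) = 2

def commonFace (X : Finset (Finset V)) (n : ℕ) :
    Sym2 {σ : Finset V // σ ∈ faces X n} → Finset V :=
  Sym2.lift ⟨fun a b => a.1 ∩ b.1, fun a b => inter_comm a.1 b.1⟩

@[simp]
lemma commonFace_mk (a b : {σ : Finset V // σ ∈ faces X n}) :
    commonFace X n s(a, b) = a.1 ∩ b.1 :=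
  rfl

lemma edgeInSupp_iff {φ : Finset V → ZMod 2} {e : Sym2 {σ : Finset V // σ ∈ faces X n}} :
    edgeInSupp X n φ e ↔ φ (commonFace X n e) ≠ 0 := by
  induction e using Sym2.ind
  rfl

lemma inter_eq_of_subset_of_subset {τ a b : Finset V} (hτ : τ ∈ faces X (n - 1))
    (ha : a ∈ faces X n) (hb : b ∈ faces X n) (hab : a ≠ b) (hτa : τ ⊆ a)
    (hτb : τ ⊆ b) : a ∩ b = τ := by
  have hτcard := (mem_filter.1 hτ).2
  have hacard := (mem_filter.1 ha).2
  have hbcard := (mem_filter.1 hb).2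
  have hlt : #(a ∩ b) < #a := by
    refine card_lt_card (ssubset_of_subset_of_ne inter_subset_left fun h => hab ?_)
    exact eq_of_subset_of_card_le (inter_eq_left.1 h) (by omega)
  exact (eq_of_subset_of_card_le (subset_inter hτa hτb) (by omega)).symm

lemma IsThin.eq_or_eq (hthin : IsThin X n) {τ a b c : Finset V} (hτ : τ ∈ faces X (n - 1))
    (ha : a ∈ faces X n) (hb : b ∈ faces X n) (hc : c ∈ faces X n) (hab : a ≠ b)
    (hτa : τ ⊆ a) (hτb : τ ⊆ b) (hτc : τ ⊆ c) : c = a ∨ c = b := by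
  by_contra! hc'
  have hsub : {c, a, b} ⊆ (faces X n).filter fun σ => τ ⊆ σ := by
    simp only [insert_subset_iff, singleton_subset_iff, mem_filter]
    exact ⟨⟨hc, hτc⟩, ⟨ha, hτa⟩, hb, hτb⟩
  have := card_le_card hsub
  rw [hthin τ hτ, card_insert_of_notMem (by simpa using hc'), card_pair hab] at this
  omega

lemma commonFace_mem_faces (hX : IsComplex X) (hn : 1 ≤ n)
    {e : Sym2 {σ : Finset V // σ ∈ faces X n}} (he : e ∈ (flipGraph X n).edgeSet) :
    commonFace X n e ∈ faces X (n - 1) := by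
  induction e using Sym2.ind with
  | _ a b =>
    have hcard : #(a.1 ∩ b.1) = n := he.2
    rw [commonFace_mk]
    refine mem_filter.2 ⟨hX.2 a (mem_filter.1 a.2).1 _ inter_subset_left ?_, by omega⟩
    rw [← card_pos, hcard]
    exact hn

lemma commonFace_injOn (hX : IsComplex X) (hn : 1 ≤ n) (hthin : IsThin X n) :
    Set.InjOn (commonFace X n) (flipGraph X n).edgeSet := by
  intro e he e' he' h
  induction e using Sym2.ind with
  | _ a b =>
  induction e' using Sym2.ind with
  | _ c d =>
    have hτ := commonFace_mem_faces hX hn he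
    simp only [commonFace_mk] at h hτ
    have hab : a.1 ≠ b.1 := fun h => he.1 (Subtype.ext h)
    have hcd : c ≠ d := he'.1
    have hτc : a.1 ∩ b.1 ⊆ c.1 := h ▸ inter_subset_left
    have hτd : a.1 ∩ b.1 ⊆ d.1 := h ▸ inter_subset_right
    rcases hthin.eq_or_eq hτ a.2 b.2 c.2 hab inter_subset_left inter_subset_right hτc
      with hc | hc <;>
    rcases hthin.eq_or_eq hτ a.2 b.2 d.2 hab inter_subset_left inter_subset_right hτd
      with hd | hd <;>
    first
    | exact absurd (Subtype.ext (hc.trans hd.symm)) hcd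
    | simp [Subtype.ext hc, Subtype.ext hd, Sym2.eq_swap]

lemma commonFace_image_edgeSet (hX : IsComplex X) (hn : 1 ≤ n) (hthin : IsThin X n) :
    commonFace X n '' (flipGraph X n).edgeSet = faces X (n - 1) := by
  refine Set.Subset.antisymm (Set.image_subset_iff.2 fun e he => commonFace_mem_faces hX hn he)
    fun σ hσ => ?_
  obtain ⟨a, b, hab, hs⟩ := card_eq_two.1 (hthin σ hσ)
  have ha : a ∈ (faces X n).filter fun τ => σ ⊆ τ := hs ▸ mem_insert_self a {b}
  have hb : b ∈ (faces X n).filter fun τ => σ ⊆ τ :=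
    hs ▸ mem_insert_of_mem (mem_singleton_self b)
  rw [mem_filter] at ha hb
  have hinter := inter_eq_of_subset_of_subset hσ ha.1 hb.1 hab ha.2 hb.2
  refine ⟨s(⟨a, ha.1⟩, ⟨b, hb.1⟩), ⟨fun h => hab (congrArg Subtype.val h), ?_⟩,
    hinter⟩
  simp only [hinter, (mem_filter.1 hσ).2]
  omega

variable {C : SimpleGraph {σ : Finset V // σ ∈ faces X n}} {z : Finset V → ZMod 2}

lemma ncard_edgeSet_eq_cnorm (hX : IsComplex X) (hn : 1 ≤ n) (hthin : IsThin X n)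
    (hC : C ≤ flipGraph X n) (hz : ↑(csupp X (n - 1) z) = commonFace X n '' C.edgeSet) :
    C.edgeSet.ncard = cnorm X (n - 1) z := by
  rw [cnorm, ← Set.ncard_coe_finset, hz,
    ((commonFace_injOn hX hn hthin).mono (SimpleGraph.edgeSet_mono hC)).ncard_image]

lemma ncard_edgeSet_inter_edgeInSupp (hX : IsComplex X) (hn : 1 ≤ n) (hthin : IsThin X n)
    (hC : C ≤ flipGraph X n) (hz : ↑(csupp X (n - 1) z) = commonFace X n '' C.edgeSet)
    (φ : Finset V → ZMod 2) :
    (C.edgeSet ∩ {e | edgeInSupp X n φ e}).ncard =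
      #(csupp X (n - 1) φ ∩ csupp X (n - 1) z) := by
  have hpre : {e | edgeInSupp X n φ e} = commonFace X n ⁻¹' {σ | φ σ ≠ 0} := by
    ext e
    exact edgeInSupp_iff
  rw [hpre, ← ((commonFace_injOn hX hn hthin).mono
      (Set.inter_subset_left.trans (SimpleGraph.edgeSet_mono hC))).ncard_image,
    Set.image_inter_preimage, ← hz, ← Set.ncard_coe_finset]
  congr 1
  ext σ
  simp only [csupp, coe_inter, coe_filter, Set.mem_inter_iff, Set.mem_ofPred_eq]
  tauto

lemma ncard_neighborSet_eq_card_filter_csupp (hX : IsComplex X) (hn : 1 ≤ n)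
    (hthin : IsThin X n) (hC : C ≤ flipGraph X n)
    (hz : ↑(csupp X (n - 1) z) = commonFace X n '' C.edgeSet)
    (v : {σ : Finset V // σ ∈ faces X n}) :
    (C.neighborSet v).ncard = #((csupp X (n - 1) z).filter (· ⊆ v.1)) := by
  have hinj : Set.InjOn (fun w => commonFace X n s(v, w)) (C.neighborSet v) :=
    fun w hw w' hw' h => Sym2.congr_right.1 (commonFace_injOn hX hn hthin (hC hw) (hC hw') h)
  rw [← hinj.ncard_image, ← Set.ncard_coe_finset, coe_filter]
  congr 1
  ext σ
  simp only [Set.mem_image, SimpleGraph.mem_neighborSet, Set.mem_ofPred_eq]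
  rw [← mem_coe, hz]
  constructor
  · rintro ⟨w, hw, rfl⟩
    exact ⟨⟨s(v, w), hw, rfl⟩, inter_subset_left⟩
  · rintro ⟨⟨e, he, rfl⟩, hsub⟩
    induction e using Sym2.ind with
    | _ a b =>
      have hab : a.1 ≠ b.1 := fun h => C.ne_of_adj he (Subtype.ext h)
      rcases hthin.eq_or_eq (commonFace_mem_faces hX hn (hC he)) a.2 b.2 v.2 hab
        inter_subset_left inter_subset_right hsub with h | h
      · obtain rfl : v = a := Subtype.ext h
        exact ⟨b, he, rfl⟩
      · obtain rfl : v = b := Subtype.ext h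
        exact ⟨a, he.symm, inter_comm _ _⟩

lemma cob_eq_zero_iff_even_ncard_neighborSet (hX : IsComplex X) (hn : 1 ≤ n)
    (hthin : IsThin X n) (hC : C ≤ flipGraph X n)
    (hz : ↑(csupp X (n - 1) z) = commonFace X n '' C.edgeSet)
    (v : {σ : Finset V // σ ∈ faces X n}) :
    cob X (n - 1) z v.1 = 0 ↔ Even (C.neighborSet v).ncard := by
  rw [cob_eq_card_filter_csupp, ncard_neighborSet_eq_card_filter_csupp hX hn hthin hC hz,
    ZMod.natCast_eq_zero_iff_even]

lemma exists_csupp_eq_image_edgeSet (hX : IsComplex X) (hn : 1 ≤ n) (hC : C ≤ flipGraph X n) :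
    ∃ z : Finset V → ZMod 2,
      ↑(csupp X (n - 1) z) = commonFace X n '' C.edgeSet := by
  refine ⟨(commonFace X n '' C.edgeSet).indicator 1, ?_⟩
  ext σ
  simp only [csupp, coe_filter, Set.mem_ofPred_eq, Set.indicator_apply_ne_zero,
    Function.support_one, Set.inter_univ]
  exact ⟨And.right, fun hσ => ⟨Set.image_mono (SimpleGraph.edgeSet_mono hC) hσ |>.elim
    fun e ⟨he, h⟩ => h ▸ commonFace_mem_faces hX hn he, hσ⟩⟩

lemma exists_le_flipGraph_csupp_eq (hX : IsComplex X) (hn : 1 ≤ n) (hthin : IsThin X n)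
    (z : Finset V → ZMod 2) : ∃ C ≤ flipGraph X n,
      ↑(csupp X (n - 1) z) = commonFace X n '' C.edgeSet := by
  refine ⟨(flipGraph X n).deleteEdges (commonFace X n ⁻¹' {σ | z σ = 0}),
    SimpleGraph.deleteEdges_le _, ?_⟩
  rw [SimpleGraph.edgeSet_deleteEdges, Set.image_sdiff_preimage,
    commonFace_image_edgeSet hX hn hthin]
  ext σ
  simp [csupp]

end FlipGraph

theorem pseudomanifold_cosystole_iff_general {V : Type*} [DecidableEq V]
    (n : ℕ) (hn : 2 ≤ n) (X : Finset (Finset V))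
    (hpm : IsPseudomanifold X n)
    (hcoh : ∀ φ : Finset V → ZMod 2,
      (∀ τ ∈ faces X n, cob X (n - 1) φ τ = 0) →
      ∃ ψ : Finset V → ZMod 2, ∀ σ ∈ faces X (n - 1), φ σ = cob X (n - 2) ψ σ)
    (φ : Finset V → ZMod 2) :
    cnorm X (n - 1) φ = cosys X (n - 1) φ ↔
      ∀ C : SimpleGraph {σ : Finset V // σ ∈ faces X n}, C ≤ flipGraph X n →
        (∀ v, Even ((C.neighborSet v).ncard)) →
        2 * (C.edgeSet ∩ {e | edgeInSupp X n φ e}).ncard ≤ C.edgeSet.ncard := by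
  obtain ⟨hX, -, hthin, -⟩ := hpm
  have hn1 : 1 ≤ n := by omega
  rw [cnorm_eq_cosys_iff_forall_coboundary (by omega), show n - 1 - 1 = n - 2 by omega]
  constructor
  · intro hφ C hC hC_eulerian
    obtain ⟨z, hz⟩ := exists_csupp_eq_image_edgeSet hX hn1 hC
    obtain ⟨ψ, hψ⟩ := hcoh z fun τ hτ =>
      (cob_eq_zero_iff_even_ncard_neighborSet hX hn1 hthin hC hz ⟨τ, hτ⟩).2 (hC_eulerian _)
    rw [ncard_edgeSet_eq_cnorm hX hn1 hthin hC hz,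
      ncard_edgeSet_inter_edgeInSupp hX hn1 hthin hC hz, cnorm, csupp_congr hψ]
    exact hφ ψ
  · intro hφ ψ
    obtain ⟨C, hC, hz⟩ := exists_le_flipGraph_csupp_eq hX hn1 hthin (cob X (n - 2) ψ)
    have hcocycle : ∀ τ ∈ faces X n, cob X (n - 1) (cob X (n - 2) ψ) τ = 0 := by
      obtain ⟨k, rfl⟩ : ∃ k, n = k + 2 := ⟨n - 2, by omega⟩
      exact fun τ hτ => cob_cob_eq_zero hX ψ hτ
    have := hφ C hC fun v =>
      (cob_eq_zero_iff_even_ncard_neighborSet hX hn1 hthin hC hz v).1 (hcocycle v.1 v.2)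
    rwa [ncard_edgeSet_eq_cnorm hX hn1 hthin hC hz,
      ncard_edgeSet_inter_edgeInSupp hX hn1 hthin hC hz] at this

/-- **Combinatorial characterization of codimension-one cosystoles of pseudomanifolds**:
for an `n`-pseudomanifold `X` with `H^{n-1}(X; ℤ/2) = 0`, an `(n-1)`-cochain `φ` is a
cosystole iff `2|E(C) ∩ E_φ| ≤ |E(C)|` for every Eulerian subgraph `C` of the flip
graph. -/
theorem pseudomanifold_cosystole_iff {V : Type*} [DecidableEq V] [Fintype V]
    (n : ℕ) (hn : 2 ≤ n) (X : Finset (Finset V))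
    (hpm : IsPseudomanifold X n)
    (hcoh : ∀ φ : Finset V → ZMod 2,
      (∀ τ ∈ faces X n, cob X (n - 1) φ τ = 0) →
      ∃ ψ : Finset V → ZMod 2, ∀ σ ∈ faces X (n - 1), φ σ = cob X (n - 2) ψ σ)
    (φ : Finset V → ZMod 2) :
    cnorm X (n - 1) φ = cosys X (n - 1) φ ↔
      ∀ C : SimpleGraph {σ : Finset V // σ ∈ faces X n}, C ≤ flipGraph X n →
        (∀ v, Even ((C.neighborSet v).ncard)) →
        2 * (C.edgeSet ∩ {e | edgeInSupp X n φ e}).ncard ≤ C.edgeSet.ncard :=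
  pseudomanifold_cosystole_iff_general n hn X hpm hcoh φ
end

section
/- Expansion of the hypercube: For all d ≥ 2 and all 0 ≤ k ≤ d − 1, h^k(Q_d) = 1. Equivalently: every k-cochain φ of the hypercube complex Q_d over Z/2 satisfies ‖φ‖_csy ≤ ‖d_kφ‖, and there exists a k-cochain φ with ‖φ‖_csy = ‖d_kφ‖ = 2^{d−k−1} > 0. -/
/-!
`‖φ‖_csy ≤ ‖dφ‖` is proved by induction on `d`, cutting `Q_{d+1}` along its first coordinate
into the faces `x₀ = 0`, `x₀ = 1` (copies of `Q_d`) and the cells with `x₀ = ∗` (a copy of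
`Q_d` one degree lower). Write `φ_0, φ_1, φ_∗` for the three pieces of `φ`; the pieces of `dφ`
are `dφ_0`, `dφ_1` and `φ_0 + φ_1 + dφ_∗`. If `ψ` is an optimal correction of `φ_b`, putting
`ψ` on the face `b` and `ψ + φ_∗` on the other face kills `φ` on the `∗`-cells, so
`‖φ‖_csy ≤ 2 ‖φ_b‖_csy + ‖φ_0 + φ_1 + dφ_∗‖`; choosing the better face and applying induction
to `φ_0` and `φ_1` gives `‖dφ‖`.

Equality holds for the indicator `W` of the `k`-cells `(∗, …, ∗, 0, x)`: `dW` is the indicator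
of the `2^{d-k-1}` cells `(∗, …, ∗, ∗, x)`, whose facet sets are pairwise disjoint. Every
cochain cohomologous to `W` has the same coboundary (`dd = 0`, and `d1 = 0` in degree 0), so
its support meets each of these facet sets.
-/
open Finset

/-- The `k`-cells of the `d`-dimensional hypercube complex: functions
`{1,…,d} → {0,1,∗}` with exactly `k` coordinates equal to `∗` (= `none`). -/
def qcells (d k : ℕ) : Finset (Fin d → Option Bool) :=
  Finset.univ.filter fun c => (Finset.univ.filter fun i => c i = none).card = k

/-- The norm of a `k`-cochain of the hypercube complex. -/
def qnorm (d k : ℕ) (φ : (Fin d → Option Bool) → ZMod 2) : ℕ :=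
  ((qcells d k).filter fun c => φ c ≠ 0).card

/-- The coboundary of a `k`-cochain of the hypercube complex: the sum of `φ` over the
facets of a `(k+1)`-cell `τ`, i.e. over the `k`-cells obtained from `τ` by replacing one
`∗`-coordinate by `0` or `1`. -/
def qcob (d k : ℕ) (φ : (Fin d → Option Bool) → ZMod 2) :
    (Fin d → Option Bool) → ZMod 2 :=
  fun τ => ∑ σ ∈ (qcells d k).filter
      (fun σ => ∃ i : Fin d, τ i = none ∧ ∃ b : Bool, σ = Function.update τ i (some b)),
    φ σ

/-- The cosystolic norm of a `k`-cochain of the hypercube complex, with the reduced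
convention at `k = 0`. -/
noncomputable def qcosys (d k : ℕ) (φ : (Fin d → Option Bool) → ZMod 2) : ℕ :=
  if k = 0 then
    min (qnorm d 0 φ) (qnorm d 0 fun c => 1 + φ c)
  else
    sInf {m | ∃ ψ : (Fin d → Option Bool) → ZMod 2,
      m = qnorm d k fun τ => φ τ + qcob d (k - 1) ψ τ}

namespace Hypercube

abbrev Cochain (d : ℕ) := (Fin d → Option Bool) → ZMod 2

def stars {d : ℕ} (c : Fin d → Option Bool) : Finset (Fin d) := univ.filter (c · = none)

section Cells

variable {d k : ℕ}

theorem mem_qcells {c : Fin d → Option Bool} : c ∈ qcells d k ↔ #(stars c) = k := by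
  simp [qcells, stars]

theorem qcells_eq_empty (h : d < k) : qcells d k = ∅ := by
  refine eq_empty_of_forall_notMem fun c hc => ?_
  have := card_le_univ (stars c)
  rw [Fintype.card_fin, mem_qcells.1 hc] at this
  omega

theorem stars_update (τ : Fin d → Option Bool) (j : Fin d) (b : Bool) :
    stars (Function.update τ j (some b)) = (stars τ).erase j := by
  ext i
  by_cases h : i = j <;> simp [stars, Function.update_apply, h]

theorem update_mem_qcells {τ : Fin d → Option Bool} (hτ : τ ∈ qcells d (k + 1)) {j : Fin d}
    (hj : τ j = none) (b : Bool) : Function.update τ j (some b) ∈ qcells d k := by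
  rw [mem_qcells] at hτ ⊢
  rw [stars_update, card_erase_of_mem (by simpa [stars] using hj), hτ, Nat.add_sub_cancel]

theorem card_filter_stars_eq (S : Finset (Fin d)) :
    #(univ.filter fun c : Fin d → Option Bool => stars c = S) = 2 ^ (d - #S) := by
  have hpi : (univ.filter fun c : Fin d → Option Bool => stars c = S) =
      Fintype.piFinset fun i => if i ∈ S then {none} else {none}ᶜ := by
    ext c
    simp only [mem_filter, mem_univ, true_and, Fintype.mem_piFinset, Finset.ext_iff, stars]
    refine forall_congr' fun i => ?_
    split_ifs <;> simp [*]
  rw [hpi, Fintype.card_piFinset]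
  simp only [apply_ite, card_singleton, card_compl, Fintype.card_option, Fintype.card_bool,
    prod_ite, prod_const_one, prod_const, one_mul]
  rw [filter_notMem_eq_sdiff, ← compl_eq_univ_sdiff, card_compl, Fintype.card_fin]

theorem qcob_eq_sum (φ : Cochain d) {τ : Fin d → Option Bool} (hτ : τ ∈ qcells d (k + 1)) :
    qcob d k φ τ = ∑ j ∈ stars τ, ∑ b : Bool, φ (Function.update τ j (some b)) := by
  have hfacets : ((qcells d k).filter fun σ =>
      ∃ i, τ i = none ∧ ∃ b : Bool, σ = Function.update τ i (some b)) =
      (stars τ ×ˢ univ).image fun p => Function.update τ p.1 (some p.2) := by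
    ext σ
    simp only [mem_filter, mem_image, mem_product, mem_univ, and_true, stars, true_and,
      Prod.exists]
    constructor
    · rintro ⟨-, i, hi, b, rfl⟩
      exact ⟨i, b, hi, rfl⟩
    · rintro ⟨i, b, hi, rfl⟩
      exact ⟨update_mem_qcells hτ hi b, i, hi, b, rfl⟩
  have hinj : Set.InjOn (fun p : Fin d × Bool => Function.update τ p.1 (some p.2))
      ↑(stars τ ×ˢ (univ : Finset Bool)) := by
    rintro ⟨i, b⟩ hi ⟨j, b'⟩ - h
    have hij := congrFun h i
    simp only [mem_coe, mem_product, stars, mem_filter] at hi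
    by_cases hji : i = j
    · subst hji
      simpa using hij
    · simp [Function.update_of_ne hji, hi.1.2] at hij
  rw [qcob, hfacets, sum_image hinj, sum_product]

theorem qcob_eq_zero_of_notMem (φ : Cochain d) {τ : Fin d → Option Bool}
    (hτ : τ ∉ qcells d (k + 1)) : qcob d k φ τ = 0 := by
  refine sum_eq_zero fun σ hσ => absurd ?_ hτ
  obtain ⟨hσk, i, hi, b, rfl⟩ := mem_filter.1 hσ
  have hi' : i ∈ stars τ := by simpa [stars] using hi
  rw [mem_qcells, stars_update, card_erase_of_mem hi'] at hσk
  have := card_pos.2 ⟨i, hi'⟩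
  rw [mem_qcells]
  omega

theorem qcob_add (φ ψ : Cochain d) : qcob d k (φ + ψ) = qcob d k φ + qcob d k ψ := by
  ext τ
  simp [qcob, sum_add_distrib]

theorem qcob_zero : qcob d k (0 : Cochain d) = 0 := by
  ext τ
  simp [qcob]

theorem qcob_one {τ : Fin d → Option Bool} (hτ : τ ∈ qcells d (k + 1)) :
    qcob d k 1 τ = 0 := by
  simp [qcob_eq_sum _ hτ, show (2 : ZMod 2) = 0 from rfl]

end Cells

theorem sum_sum_erase_eq_zero {α R : Type*} [DecidableEq α] [Ring R] [CharP R 2]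
    {S : Finset α} {F : α → α → R} (hF : ∀ i ∈ S, ∀ j ∈ S, i ≠ j → F i j = F j i) :
    ∑ i ∈ S, ∑ j ∈ S.erase i, F i j = 0 := by
  rw [← sum_finset_product' S.offDiag S (fun i => S.erase i)
    (fun p => by rw [mem_offDiag, mem_erase]; tauto)]
  refine sum_involution (fun p _ => p.swap) (fun p hp => ?_) (fun p hp _ => ?_)
    (fun p hp => ?_) (fun p _ => rfl) <;> obtain ⟨hi, hj, hij⟩ := mem_offDiag.1 hp
  · simp [hF _ hi _ hj hij, CharTwo.add_self_eq_zero]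
  · exact fun h => hij (congrArg Prod.snd h)
  · exact mem_offDiag.2 ⟨hj, hi, Ne.symm hij⟩

theorem qcob_qcob {d k : ℕ} (hk : k ≠ 0) (ψ : Cochain d) {τ : Fin d → Option Bool}
    (hτ : τ ∈ qcells d (k + 1)) : qcob d k (qcob d (k - 1) ψ) τ = 0 := by
  obtain ⟨k, rfl⟩ := Nat.exists_eq_succ_of_ne_zero hk
  rw [qcob_eq_sum _ hτ]
  calc _ = ∑ j ∈ stars τ, ∑ i ∈ (stars τ).erase j, ∑ b : Bool, ∑ b' : Bool,
        ψ (Function.update (Function.update τ j (some b)) i (some b')) := by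
        refine sum_congr rfl fun j hj => ?_
        simp only [Nat.succ_sub_one, qcob_eq_sum _ (update_mem_qcells hτ (mem_filter.1 hj).2 _),
          stars_update]
        exact sum_comm
    _ = 0 := by
        refine sum_sum_erase_eq_zero fun i _ j _ hij => ?_
        rw [sum_comm]
        simp only [Function.update_comm hij]

section Norms

variable {d m : ℕ}

theorem qnorm_congr {φ ψ : Cochain d} (h : ∀ c ∈ qcells d m, φ c = ψ c) :
    qnorm d m φ = qnorm d m ψ := by
  unfold qnorm
  congr 1
  exact filter_congr fun c hc => by rw [h c hc]

theorem qnorm_eq_zero {φ : Cochain d} (h : ∀ c ∈ qcells d m, φ c = 0) : qnorm d m φ = 0 := by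
  simpa [qnorm] using h

theorem qnorm_add_le (φ ψ : Cochain d) : qnorm d m (φ + ψ) ≤ qnorm d m φ + qnorm d m ψ := by
  unfold qnorm
  refine (card_le_card fun c hc => ?_).trans (card_union_le _ _)
  simp only [mem_filter, mem_union, Pi.add_apply] at hc ⊢
  by_cases hφ : φ c = 0
  · exact Or.inr ⟨hc.1, by simpa [hφ] using hc.2⟩
  · exact Or.inl ⟨hc.1, hφ⟩

theorem qnorm_add_qnorm_one_add (φ : Cochain d) :
    qnorm d m φ + qnorm d m (1 + φ) = #(qcells d m) := by
  have h : ∀ x : ZMod 2, ¬x ≠ 0 ↔ 1 + x ≠ 0 := by decide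
  unfold qnorm
  simp only [Pi.add_apply, Pi.one_apply, ← h]
  exact card_filter_add_card_filter_not _

theorem qnorm_eq_sum (φ : Cochain d) :
    qnorm d m φ = ∑ c, if c ∈ qcells d m ∧ φ c ≠ 0 then 1 else 0 := by
  rw [qnorm, ← card_filter]
  congr 1
  ext c
  simp

end Norms

section Slices

variable {d k : ℕ}

def slice (x : Option Bool) (φ : Cochain (d + 1)) : Cochain d := fun g => φ (Fin.cons x g)

theorem slice_add (x : Option Bool) (φ ψ : Cochain (d + 1)) :
    slice x (φ + ψ) = slice x φ + slice x ψ :=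
  rfl

theorem card_stars_cons (x : Option Bool) (g : Fin d → Option Bool) :
    #(stars (Fin.cons x g : Fin (d + 1) → Option Bool)) =
      (if x = none then 1 else 0) + #(stars g) := by
  simp only [stars, card_filter, Fin.sum_univ_succ, Fin.cons_zero, Fin.cons_succ]

theorem cons_some_mem_qcells (b : Bool) (g : Fin d → Option Bool) :
    Fin.cons (some b) g ∈ qcells (d + 1) k ↔ g ∈ qcells d k := by
  simp [mem_qcells, card_stars_cons]

theorem cons_none_mem_qcells (g : Fin d → Option Bool) :
    Fin.cons none g ∈ qcells (d + 1) (k + 1) ↔ g ∈ qcells d k := by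
  simp [mem_qcells, card_stars_cons, add_comm]

theorem cons_none_notMem_qcells_zero (g : Fin d → Option Bool) :
    Fin.cons none g ∉ qcells (d + 1) 0 := by
  simp [mem_qcells, card_stars_cons]

theorem sum_bool_eq_add_not {M : Type*} [AddCommMonoid M] (f : Bool → M) (b : Bool) :
    ∑ b', f b' = f b + f !b := by
  cases b <;> simp [add_comm]

theorem sum_cells_succ {M : Type*} [AddCommMonoid M] (f : (Fin (d + 1) → Option Bool) → M)
    (b : Bool) : ∑ c, f c = ∑ g, f (Fin.cons (some b) g) + ∑ g, f (Fin.cons (some !b) g) +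
      ∑ g, f (Fin.cons none g) := by
  rw [← (Fin.consEquiv fun _ => Option Bool).sum_comp, Fintype.sum_prod_type,
    Fintype.sum_option, sum_bool_eq_add_not _ b]
  simp [Fin.consEquiv, add_comm]

theorem qnorm_succ_zero (φ : Cochain (d + 1)) (b : Bool) :
    qnorm (d + 1) 0 φ = qnorm d 0 (slice (some b) φ) + qnorm d 0 (slice (some !b) φ) := by
  simp only [qnorm_eq_sum, sum_cells_succ _ b, slice, cons_some_mem_qcells,
    cons_none_notMem_qcells_zero, false_and, if_false, sum_const_zero, add_zero]
  rfl

theorem qnorm_succ_succ (φ : Cochain (d + 1)) (b : Bool) :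
    qnorm (d + 1) (k + 1) φ = qnorm d (k + 1) (slice (some b) φ) +
      qnorm d (k + 1) (slice (some !b) φ) + qnorm d k (slice none φ) := by
  simp only [qnorm_eq_sum, sum_cells_succ _ b, slice, cons_some_mem_qcells,
    cons_none_mem_qcells]
  rfl

theorem qcob_cons (φ : Cochain (d + 1)) {x : Option Bool} {g : Fin d → Option Bool}
    (hxg : Fin.cons x g ∈ qcells (d + 1) (k + 1)) :
    qcob (d + 1) k φ (Fin.cons x g) = (if x = none then ∑ b, slice (some b) φ g else 0) +
      ∑ j ∈ stars g, ∑ b : Bool, slice x φ (Function.update g j (some b)) := by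
  rw [qcob_eq_sum _ hxg, stars, sum_filter, Fin.sum_univ_succ, stars, sum_filter]
  simp only [Fin.cons_zero, Fin.cons_succ, Fin.update_cons_zero, ← Fin.cons_update, slice]

theorem slice_qcob_some (φ : Cochain (d + 1)) (b : Bool) {g : Fin d → Option Bool}
    (hg : g ∈ qcells d (k + 1)) :
    slice (some b) (qcob (d + 1) k φ) g = qcob d k (slice (some b) φ) g := by
  rw [slice, qcob_cons _ ((cons_some_mem_qcells b g).2 hg), qcob_eq_sum _ hg]
  simp

theorem slice_none_qcob (φ : Cochain (d + 1)) {g : Fin d → Option Bool}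
    (hg : g ∈ qcells d k) : slice none (qcob (d + 1) k φ) g =
      ∑ b, slice (some b) φ g + qcob d (k - 1) (slice none φ) g := by
  rw [slice, qcob_cons _ ((cons_none_mem_qcells g).2 hg)]
  cases k with
  | zero =>
    have hg1 : g ∉ qcells d (0 + 1) := by simp [mem_qcells.1 hg, mem_qcells]
    simp [card_eq_zero.1 (mem_qcells.1 hg), qcob_eq_zero_of_notMem _ hg1]
  | succ k => simp [qcob_eq_sum _ hg]

end Slices

section Cosystolic

variable {d k : ℕ}

theorem qcosys_zero (φ : Cochain d) : qcosys d 0 φ = min (qnorm d 0 φ) (qnorm d 0 (1 + φ)) :=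
  if_pos rfl

theorem qcosys_le (hk : k ≠ 0) (φ ψ : Cochain d) :
    qcosys d k φ ≤ qnorm d k (φ + qcob d (k - 1) ψ) := by
  rw [qcosys, if_neg hk]
  exact Nat.sInf_le ⟨ψ, rfl⟩

theorem exists_qcosys_eq (hk : k ≠ 0) (φ : Cochain d) :
    ∃ ψ, qcosys d k φ = qnorm d k (φ + qcob d (k - 1) ψ) := by
  rw [qcosys, if_neg hk]
  exact Nat.sInf_mem (s := {m | ∃ ψ : Cochain d, m = qnorm d k (φ + qcob d (k - 1) ψ)})
    ⟨_, 0, rfl⟩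

theorem qcosys_dim_zero (k : ℕ) (φ : Cochain 0) : qcosys 0 k φ = 0 := by
  rcases eq_or_ne k 0 with rfl | hk
  · have hpart := qnorm_add_qnorm_one_add (m := 0) φ
    have hcard : #(qcells 0 0) ≤ 1 := (card_le_univ _).trans (by simp)
    rw [qcosys_zero]
    omega
  · refine Nat.eq_zero_of_le_zero ((qcosys_le hk φ 0).trans_eq ?_)
    simp [qnorm, qcells_eq_empty (Nat.pos_of_ne_zero hk)]

theorem qnorm_succ_zero_le (χ : Cochain (d + 1)) (b : Bool) :
    qnorm (d + 1) 0 χ ≤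
      2 * qnorm d 0 (slice (some b) χ) + qnorm d 0 (slice (some b) χ + slice (some !b) χ) := by
  have h : slice (some !b) χ = (slice (some b) χ + slice (some !b) χ) + slice (some b) χ := by
    ext g
    simp only [Pi.add_apply]
    grind
  have := qnorm_add_le (m := 0) (slice (some b) χ + slice (some !b) χ) (slice (some b) χ)
  rw [← h] at this
  rw [qnorm_succ_zero χ b]
  omega

theorem qcosys_succ_zero_le (φ : Cochain (d + 1)) (b : Bool) :
    qcosys (d + 1) 0 φ ≤
      2 * qcosys d 0 (slice (some b) φ) + qnorm d 0 (slice none (qcob (d + 1) 0 φ)) := by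
  have hX : qnorm d 0 (slice none (qcob (d + 1) 0 φ)) =
      qnorm d 0 (slice (some b) φ + slice (some !b) φ) := by
    refine qnorm_congr fun g hg => ?_
    have hg1 : g ∉ qcells d (0 + 1) := by simp [mem_qcells.1 hg, mem_qcells]
    rw [slice_none_qcob _ hg, qcob_eq_zero_of_notMem _ hg1, add_zero, sum_bool_eq_add_not _ b]
    rfl
  have h1 : slice (some b) (1 + φ) + slice (some !b) (1 + φ) =
      slice (some b) φ + slice (some !b) φ := by
    ext g
    simp only [slice, Pi.add_apply, Pi.one_apply]
    grind
  have hφ := qnorm_succ_zero_le φ b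
  have h1φ := qnorm_succ_zero_le (1 + φ) b
  rw [h1, show slice (some b) (1 + φ) = 1 + slice (some b) φ from rfl] at h1φ
  rw [qcosys_zero, qcosys_zero, hX]
  omega

theorem qcosys_succ_succ_le (φ : Cochain (d + 1)) (b : Bool) :
    qcosys (d + 1) (k + 1) φ ≤ 2 * qcosys d (k + 1) (slice (some b) φ) +
      qnorm d (k + 1) (slice none (qcob (d + 1) (k + 1) φ)) := by
  obtain ⟨ψ, hψ⟩ := exists_qcosys_eq k.add_one_ne_zero (slice (some b) φ)
  rw [Nat.add_sub_cancel] at hψ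
  -- `Ψ` extends `ψ` from the face `x₀ = b` so that `φ + dΨ` vanishes on the cells `x₀ = ∗`.
  let Ψ : Cochain (d + 1) := fun c => if c 0 = none then 0 else
    ψ (Fin.tail c) + if c 0 = some b then 0 else slice none φ (Fin.tail c)
  have hΨb : slice (some b) Ψ = ψ := by ext g; simp [Ψ, slice]
  have hΨnb : slice (some !b) Ψ = ψ + slice none φ := by ext g; cases b <;> simp [Ψ, slice]
  have hΨn : slice none Ψ = 0 := by ext g; simp [Ψ, slice]
  have hb : qnorm d (k + 1) (slice (some b) (φ + qcob (d + 1) k Ψ)) =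
      qnorm d (k + 1) (slice (some b) φ + qcob d k ψ) :=
    qnorm_congr fun g hg => by simp [slice_add, slice_qcob_some _ _ hg, hΨb]
  have hnb : qnorm d (k + 1) (slice (some !b) (φ + qcob (d + 1) k Ψ)) ≤
      qnorm d (k + 1) (slice (some b) φ + qcob d k ψ) +
        qnorm d (k + 1) (slice none (qcob (d + 1) (k + 1) φ)) := by
    refine le_of_eq_of_le (qnorm_congr fun g hg => ?_) (qnorm_add_le _ _)
    simp only [slice_add, Pi.add_apply, slice_qcob_some _ _ hg, slice_none_qcob _ hg, hΨnb,
      qcob_add, Nat.add_sub_cancel, sum_bool_eq_add_not _ b]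
    grind
  have hnone : qnorm d k (slice none (φ + qcob (d + 1) k Ψ)) = 0 :=
    qnorm_eq_zero fun g hg => by
      simp only [slice_add, Pi.add_apply, slice_none_qcob _ hg, sum_bool_eq_add_not _ b, hΨb,
        hΨnb, hΨn, qcob_zero, Pi.zero_apply, add_zero]
      grind
  calc qcosys (d + 1) (k + 1) φ ≤ qnorm (d + 1) (k + 1) (φ + qcob (d + 1) k Ψ) :=
        qcosys_le k.add_one_ne_zero φ Ψ
    _ = _ := qnorm_succ_succ _ b
    _ ≤ _ := by omega

theorem qcosys_succ_le (φ : Cochain (d + 1)) (b : Bool) (k : ℕ) :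
    qcosys (d + 1) k φ ≤
      2 * qcosys d k (slice (some b) φ) + qnorm d k (slice none (qcob (d + 1) k φ)) := by
  cases k with
  | zero => exact qcosys_succ_zero_le φ b
  | succ k => exact qcosys_succ_succ_le φ b

theorem qcosys_le_qnorm_qcob (d k : ℕ) (φ : Cochain d) :
    qcosys d k φ ≤ qnorm d (k + 1) (qcob d k φ) := by
  induction d generalizing k with
  | zero => simp [qcosys_dim_zero]
  | succ d ih =>
    have hsplit : qnorm (d + 1) (k + 1) (qcob (d + 1) k φ) =
        qnorm d (k + 1) (qcob d k (slice (some false) φ)) +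
          qnorm d (k + 1) (qcob d k (slice (some true) φ)) +
            qnorm d k (slice none (qcob (d + 1) k φ)) := by
      rw [qnorm_succ_succ _ false]
      congr 2 <;> exact qnorm_congr fun g hg => slice_qcob_some _ _ hg
    have h₀ := qcosys_succ_le φ false k
    have h₁ := qcosys_succ_le φ true k
    have ih₀ := ih k (slice (some false) φ)
    have ih₁ := ih k (slice (some true) φ)
    omega

end Cosystolic

theorem eq_Iic_iff_mem_and_erase_eq_Iio {α : Type*} [PartialOrder α] [LocallyFiniteOrderBot α]
    [DecidableEq α] {S : Finset α} {a : α} : S = Iic a ↔ a ∈ S ∧ S.erase a = Iio a := by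
  constructor
  · rintro rfl
    exact ⟨mem_Iic.2 le_rfl, Iic_erase a⟩
  · rintro ⟨ha, h⟩
    rw [← insert_erase ha, h, Iio_insert]

section Witness

variable {d : ℕ}

theorem mem_qcells_of_stars_eq_Iic {K : Fin d} {τ : Fin d → Option Bool}
    (h : stars τ = Iic K) : τ ∈ qcells d (K + 1) := by
  rw [mem_qcells, h, Fin.card_Iic]

def witness (K : Fin d) : Cochain d := fun c =>
  if stars c = Iio K ∧ c K = some false then 1 else 0

theorem qcob_witness (K : Fin d) {τ : Fin d → Option Bool} (hτ : τ ∈ qcells d (K + 1)) :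
    qcob d K (witness K) τ = if stars τ = Iic K then 1 else 0 := by
  have hfacet : ∀ j ∈ stars τ, ∑ b : Bool, witness K (Function.update τ j (some b)) =
      if j = K then (if (stars τ).erase K = Iio K then 1 else 0) else 0 := by
    intro j _
    simp only [witness, stars_update, Fintype.sum_bool]
    by_cases hj : j = K
    · subst hj
      simp
    · simp [hj, Function.update_of_ne (Ne.symm hj), CharTwo.add_self_eq_zero]
  rw [qcob_eq_sum _ hτ, sum_congr rfl hfacet, sum_ite_eq']
  simp only [eq_Iic_iff_mem_and_erase_eq_Iio, ite_and]

theorem qnorm_qcob_witness (K : Fin d) :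
    qnorm d (K + 1) (qcob d K (witness K)) = 2 ^ (d - K - 1) := by
  have h : (qcells d (K + 1)).filter (fun τ => qcob d K (witness K) τ ≠ 0) =
      univ.filter fun τ => stars τ = Iic K := by
    ext τ
    simp only [mem_filter, mem_univ, true_and]
    constructor
    · rintro ⟨hτ, h⟩
      by_contra hne
      simp [qcob_witness K hτ, hne] at h
    · intro h
      refine ⟨mem_qcells_of_stars_eq_Iic h, ?_⟩
      simp [qcob_witness K (mem_qcells_of_stars_eq_Iic h), h]
  rw [qnorm, h, card_filter_stars_eq, Fin.card_Iic, Nat.sub_sub]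

theorem pow_le_qnorm_of_qcob_eq_one (K : Fin d) {χ : Cochain d}
    (h : ∀ τ, stars τ = Iic K → qcob d K χ τ = 1) : 2 ^ (d - K - 1) ≤ qnorm d K χ := by
  rw [Nat.sub_sub, ← Fin.card_Iic, ← card_filter_stars_eq, qnorm]
  -- A facet of a cell with stars `Iic K` determines it: reset the coordinates `≤ K` to `∗`.
  refine card_le_card_of_surjOn (fun σ i => if i ≤ K then none else σ i) fun τ hτ => ?_
  replace hτ : stars τ = Iic K := (mem_filter.1 hτ).2
  have hsum := h τ hτ
  rw [qcob_eq_sum _ (mem_qcells_of_stars_eq_Iic hτ)] at hsum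
  obtain ⟨j, hj, hj'⟩ := exists_ne_zero_of_sum_ne_zero (hsum ▸ one_ne_zero)
  obtain ⟨b, -, hb⟩ := exists_ne_zero_of_sum_ne_zero hj'
  have hjK : j ≤ K := mem_Iic.1 (hτ ▸ hj)
  refine ⟨Function.update τ j (some b), ?_, ?_⟩
  · exact mem_filter.2 ⟨update_mem_qcells (mem_qcells_of_stars_eq_Iic hτ)
      (mem_filter.1 hj).2 b, hb⟩
  · ext1 i
    dsimp only
    split_ifs with hi
    · exact ((mem_filter.1 (hτ ▸ mem_Iic.2 hi : i ∈ stars τ)).2).symm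
    · exact Function.update_of_ne (by rintro rfl; exact hi hjK) _ _

theorem pow_le_qcosys_witness (K : Fin d) : 2 ^ (d - K - 1) ≤ qcosys d K (witness K) := by
  rcases eq_or_ne (K : ℕ) 0 with hK | hK
  · have hW := pow_le_qnorm_of_qcob_eq_one K (χ := witness K) fun τ hτ => by
      simp [qcob_witness K (mem_qcells_of_stars_eq_Iic hτ), hτ]
    have h1W := pow_le_qnorm_of_qcob_eq_one K (χ := 1 + witness K) fun τ hτ => by
      simp [qcob_add, qcob_one (mem_qcells_of_stars_eq_Iic hτ),
        qcob_witness K (mem_qcells_of_stars_eq_Iic hτ), hτ]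
    rw [hK] at hW h1W ⊢
    rw [qcosys_zero]
    exact le_min hW h1W
  · obtain ⟨ψ, hψ⟩ := exists_qcosys_eq hK (witness K)
    rw [hψ]
    refine pow_le_qnorm_of_qcob_eq_one K fun τ hτ => ?_
    have hτ' := mem_qcells_of_stars_eq_Iic hτ
    simp [qcob_add, qcob_witness K hτ', hτ, qcob_qcob hK ψ hτ']

end Witness

end Hypercube

/-- **Expansion of the hypercube**: `h^k(Q_d) = 1` for all `d ≥ 2` and `0 ≤ k ≤ d - 1`:
every `k`-cochain `φ` of `Q_d` satisfies `‖φ‖_csy ≤ ‖d_k φ‖`, and there is a `k`-cochain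
with `‖φ‖_csy = ‖d_k φ‖ = 2^{d-k-1} > 0`. -/
theorem hypercube_expansion (d k : ℕ) (hd : 2 ≤ d) (hk : k ≤ d - 1) :
    (∀ φ : (Fin d → Option Bool) → ZMod 2,
        qcosys d k φ ≤ qnorm d (k + 1) (qcob d k φ)) ∧
      ∃ φ : (Fin d → Option Bool) → ZMod 2,
        qcosys d k φ = qnorm d (k + 1) (qcob d k φ) ∧
          qcosys d k φ = 2 ^ (d - k - 1) := by
  refine ⟨Hypercube.qcosys_le_qnorm_qcob d k, ?_⟩
  let K : Fin d := ⟨k, by omega⟩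
  have hnorm : qnorm d (k + 1) (qcob d k (Hypercube.witness K)) = 2 ^ (d - k - 1) :=
    Hypercube.qnorm_qcob_witness K
  have hlower : 2 ^ (d - k - 1) ≤ qcosys d k (Hypercube.witness K) :=
    Hypercube.pow_le_qcosys_witness K
  have hupper := Hypercube.qcosys_le_qnorm_qcob d k (Hypercube.witness K)
  exact ⟨Hypercube.witness K, by omega, by omega⟩
end

section
/- Expansion of a product with a simplex: Let X be a finite abstract simplicial complex, let n ≥ 2, and let k ≥ 0. Assume there exists a k-cochain of X with positive cosystolic norm (so that h^k(X) is defined). Then every k-cochain Φ of the product complex Y = X × Δ^{n−1} with ‖Φ‖_csy > 0 satisfies ‖d_kΦ‖ ≥ min{ h^k(X), max{1, n/(k+2)} } · ‖Φ‖_csy; that is, h^k(X × Δ^{n−1}) ≥ min{ h^k(X), max{1, n/(k+2)} }. -/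
open Finset

section Product

variable {V : Type*} [DecidableEq V] {n : ℕ}

/-- The `k`-cells of the product complex `X × Δ^{n-1}`: pairs `(α, β)` with `α` a face of
`X`, `β` a nonempty subset of `{1,…,n}`, and `(|α| - 1) + (|β| - 1) = k`. -/
def pcells (X : Finset (Finset V)) (n k : ℕ) : Finset (Finset V × Finset (Fin n)) :=
  (X ×ˢ (Finset.univ : Finset (Fin n)).powerset).filter fun p =>
    p.2.Nonempty ∧ p.1.card + p.2.card = k + 2

/-- The norm of a `k`-cochain of the product complex. -/
def pnorm (X : Finset (Finset V)) (n k : ℕ)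
    (Φ : Finset V × Finset (Fin n) → ZMod 2) : ℕ :=
  ((pcells X n k).filter fun p => Φ p ≠ 0).card

/-- The coboundary of a cochain of the product complex:
`(dΦ)(α, β) = Σ_{α'} Φ(α', β) + Σ_{β'} Φ(α, β')`, summing over nonempty codimension-one
subsets of `α` resp. `β`. -/
def pcob (Φ : Finset V × Finset (Fin n) → ZMod 2) :
    Finset V × Finset (Fin n) → ZMod 2 :=
  fun p =>
    (∑ a ∈ (p.1.powersetCard (p.1.card - 1)).filter (fun a => a.Nonempty), Φ (a, p.2)) +
    (∑ b ∈ (p.2.powersetCard (p.2.card - 1)).filter (fun b => b.Nonempty), Φ (p.1, b))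

/-- The cosystolic norm of a `k`-cochain of the product complex, with the reduced
convention at `k = 0`. -/
noncomputable def pcosys (X : Finset (Finset V)) (n k : ℕ)
    (Φ : Finset V × Finset (Fin n) → ZMod 2) : ℕ :=
  if k = 0 then
    min (pnorm X n 0 Φ) (pnorm X n 0 fun p => 1 + Φ p)
  else
    sInf {m | ∃ Ψ : Finset V × Finset (Fin n) → ZMod 2,
      m = pnorm X n k fun p => Φ p + pcob Ψ p}

/-- The `k`-th Cheeger constant of the product complex `X × Δ^{n-1}`. -/
noncomputable def pcheeger (X : Finset (Finset V)) (n k : ℕ) : ENNReal :=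
  sInf {r : ENNReal | ∃ Φ : Finset V × Finset (Fin n) → ZMod 2,
    0 < pcosys X n k Φ ∧
    r = (pnorm X n (k + 1) (pcob Φ) : ENNReal) / (pcosys X n k Φ : ENNReal)}

end Product

section Aux

private lemma zmod2_addself : ∀ a : ZMod 2, a + a = 0 := by decide

/-- free (complex-independent) codimension-one coboundary sum -/
def cobf {γ : Type*} [DecidableEq γ] (ψ : Finset γ → ZMod 2) (s : Finset γ) : ZMod 2 :=
  ∑ x ∈ s.filter (fun x => (s.erase x).Nonempty), ψ (s.erase x)

variable {γ : Type*} [DecidableEq γ]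

lemma filter_powersetCard_eq (s : Finset γ) :
    (s.powersetCard (s.card - 1)).filter (fun a => a.Nonempty)
      = (s.filter fun x => (s.erase x).Nonempty).image (s.erase ·) := by
  ext a
  simp only [mem_filter, mem_powersetCard, mem_image]
  constructor
  · rintro ⟨⟨hsub, hcard⟩, hne⟩
    have hane : 1 ≤ a.card := hne.card_pos
    have hs2 : 2 ≤ s.card := by omega
    obtain ⟨x, hx, hxa⟩ : ∃ x ∈ s, x ∉ a := by
      by_contra hcon
      push_neg at hcon
      have hsub2 : s ⊆ a := hcon
      have := Finset.card_le_card hsub2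
      omega
    have hax : a = s.erase x := by
      apply Finset.eq_of_subset_of_card_le
      · exact Finset.subset_erase.mpr ⟨hsub, hxa⟩
      · rw [Finset.card_erase_of_mem hx]; omega
    refine ⟨x, ⟨hx, ?_⟩, hax.symm⟩
    rw [← hax]; exact hne
  · rintro ⟨x, ⟨hx, hne⟩, rfl⟩
    exact ⟨⟨Finset.erase_subset _ _, Finset.card_erase_of_mem hx⟩, hne⟩

lemma sum_powersetCard_filter (s : Finset γ) (f : Finset γ → ZMod 2) :
    ∑ a ∈ (s.powersetCard (s.card - 1)).filter (fun a => a.Nonempty), f a = cobf f s := by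
  rw [filter_powersetCard_eq, Finset.sum_image]
  · rfl
  · intro x hx y hy h
    exact Finset.erase_injOn s ((Finset.mem_filter.mp hx).1)
      ((Finset.mem_filter.mp hy).1) h

lemma cobf_of_card_le_one (g : Finset γ → ZMod 2) (s : Finset γ) (h : s.card ≤ 1) :
    cobf g s = 0 := by
  unfold cobf
  rw [Finset.filter_false_of_mem, Finset.sum_empty]
  intro x hx
  have h0 : (s.erase x).card = 0 := by
    rw [Finset.card_erase_of_mem hx]; omega
  simp [Finset.not_nonempty_iff_eq_empty, Finset.card_eq_zero.mp h0]

lemma cobf_insert (g : Finset γ → ZMod 2) (i : γ) (β : Finset γ) (hi : i ∉ β)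
    (hβ : β.Nonempty) :
    cobf g (insert i β) = g β + ∑ x ∈ β, g (insert i (β.erase x)) := by
  unfold cobf
  have hcard : (insert i β).card = β.card + 1 := Finset.card_insert_of_notMem hi
  have hfull : (insert i β).filter (fun x => ((insert i β).erase x).Nonempty) = insert i β := by
    apply Finset.filter_true_of_mem
    intro x hx
    have h1 : 1 ≤ ((insert i β).erase x).card := by
      rw [Finset.card_erase_of_mem hx]
      have := hβ.card_pos
      omega
    exact Finset.card_pos.mp (by omega)
  rw [hfull, Finset.sum_insert hi, Finset.erase_insert hi]
  congr 1
  apply Finset.sum_congr rfl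
  intro x hx
  have hne2 : i ≠ x := fun h => hi (h ▸ hx)
  rw [Finset.erase_insert_of_ne hne2]

end Aux

section Aux2
set_option linter.unusedSectionVars false

variable {V : Type*} [DecidableEq V] {n : ℕ}

/-- cone homotopy operator with apex `i` -/
def Hop (i : Fin n) (W : Finset V × Finset (Fin n) → ZMod 2) :
    Finset V × Finset (Fin n) → ZMod 2 :=
  fun p => if i ∈ p.2 then 0 else W (p.1, insert i p.2)

/-- pullback of a cochain of `X` to the product -/
def pback (ξ : Finset V → ZMod 2) : Finset V × Finset (Fin n) → ZMod 2 :=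
  fun p => if p.2.card = 1 then ξ p.1 else 0

lemma pcob_eq (W : Finset V × Finset (Fin n) → ZMod 2) (p : Finset V × Finset (Fin n)) :
    pcob W p = cobf (fun a => W (a, p.2)) p.1 + cobf (fun b => W (p.1, b)) p.2 := by
  unfold pcob
  rw [sum_powersetCard_filter, sum_powersetCard_filter]

lemma mem_pcells {X : Finset (Finset V)} {k : ℕ} {p : Finset V × Finset (Fin n)} :
    p ∈ pcells X n k ↔ p.1 ∈ X ∧ p.2.Nonempty ∧ p.1.card + p.2.card = k + 2 := by
  unfold pcells
  simp only [Finset.mem_filter, Finset.mem_product, Finset.mem_powerset,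
    Finset.subset_univ, and_true]

lemma pcob_addfun (W₁ W₂ : Finset V × Finset (Fin n) → ZMod 2)
    (p : Finset V × Finset (Fin n)) :
    pcob (fun q => W₁ q + W₂ q) p = pcob W₁ p + pcob W₂ p := by
  simp only [pcob_eq, cobf, Finset.sum_add_distrib]
  ring

lemma pback_addfun (ξ₁ ξ₂ : Finset V → ZMod 2) (p : Finset V × Finset (Fin n)) :
    pback ξ₁ p + pback ξ₂ p = pback (fun α => ξ₁ α + ξ₂ α) p := by
  unfold pback
  split <;> simp

/-- The cone homotopy identity. -/
lemma identity_I (Φ : Finset V × Finset (Fin n) → ZMod 2) (i : Fin n)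
    (α : Finset V) (β : Finset (Fin n)) (hβ : β.Nonempty) :
    Φ (α, β) + pcob (Hop i Φ) (α, β)
      = pback (fun a => Φ (a, ({i} : Finset (Fin n)))) (α, β) + Hop i (pcob Φ) (α, β) := by
  rw [pcob_eq]
  by_cases hi : i ∈ β
  · have h1 : cobf (fun a => Hop i Φ (a, (α, β).2)) (α, β).1 = 0 := by
      apply Finset.sum_eq_zero
      intro x hx
      simp [Hop, hi]
    have hHop : Hop i (pcob Φ) (α, β) = 0 := by simp [Hop, hi]
    by_cases hsing : β = {i}
    · subst hsing
      have h2 : cobf (fun b => Hop i Φ ((α, ({i} : Finset (Fin n))).1, b)) ({i} : Finset (Fin n)) = 0 :=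
        cobf_of_card_le_one _ _ (by simp)
      simp [h1, h2, hHop, pback]
    · have hersne : (β.erase i).Nonempty := by
        rw [Finset.nonempty_iff_ne_empty]
        intro h0
        rcases (Finset.erase_eq_empty_iff β i).mp h0 with h | h
        · exact hβ.ne_empty h
        · exact hsing h
      have h2 : cobf (fun b => Hop i Φ ((α, β).1, b)) β = Φ (α, β) := by
        unfold cobf
        rw [Finset.sum_eq_single_of_mem i (Finset.mem_filter.mpr ⟨hi, hersne⟩)]
        · simp [Hop, Finset.insert_erase hi]
        · intro b hb hbne
          have : i ∈ β.erase b := Finset.mem_erase.mpr ⟨fun h => hbne h.symm, hi⟩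
          simp [Hop, this]
      have hpb : pback (fun a => Φ (a, ({i} : Finset (Fin n)))) (α, β) = 0 := by
        unfold pback
        have : β.card ≠ 1 := by
          intro h1c
          obtain ⟨j, rfl⟩ := Finset.card_eq_one.mp h1c
          exact hsing (by simpa using Finset.mem_singleton.mp hi ▸ rfl)
        simp [this]
      rw [h1, h2, hpb, hHop, zero_add, add_zero, zmod2_addself]
  · have hHop : Hop i (pcob Φ) (α, β) = pcob Φ (α, insert i β) := if_neg hi
    rw [hHop, pcob_eq]
    have hA : cobf (fun a => Hop i Φ (a, (α, β).2)) (α, β).1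
        = cobf (fun a => Φ (a, (α, insert i β).2)) (α, insert i β).1 := by
      apply Finset.sum_congr rfl
      intro x hx
      simp [Hop, hi]
    have hIns : cobf (fun b => Φ ((α, insert i β).1, b)) (insert i β)
        = Φ (α, β) + ∑ x ∈ β, Φ (α, insert i (β.erase x)) := cobf_insert _ _ _ hi hβ
    have hB : cobf (fun b => Hop i Φ ((α, β).1, b)) β
        = ∑ x ∈ β.filter (fun x => (β.erase x).Nonempty), Φ (α, insert i (β.erase x)) := by
      apply Finset.sum_congr rfl
      intro x hx
      have : i ∉ β.erase x := fun h => hi (Finset.mem_of_mem_erase h)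
      simp [Hop, this]
    rw [hA, hB, hIns]
    by_cases h1 : β.card = 1
    · obtain ⟨j, rfl⟩ := Finset.card_eq_one.mp h1
      have hf : ({j} : Finset (Fin n)).filter (fun x => (({j} : Finset (Fin n)).erase x).Nonempty) = ∅ := by
        apply Finset.filter_false_of_mem
        intro x hx
        simp [Finset.mem_singleton.mp hx]
      have hpb : pback (fun a => Φ (a, ({i} : Finset (Fin n)))) (α, ({j} : Finset (Fin n)))
          = Φ (α, {i}) := by simp [pback]
      rw [hf, Finset.sum_empty, hpb]
      have hsum : ∑ x ∈ ({j} : Finset (Fin n)), Φ (α, insert i (({j} : Finset (Fin n)).erase x))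
          = Φ (α, {i}) := by simp
      rw [hsum]
      generalize Φ (α, {j}) = a
      generalize Φ (α, {i}) = b
      generalize cobf (fun x => Φ (x, insert i {j})) α = c
      revert a b c; decide
    · have h2 : 2 ≤ β.card := by
        have := hβ.card_pos
        omega
      have hf : β.filter (fun x => (β.erase x).Nonempty) = β := by
        apply Finset.filter_true_of_mem
        intro x hx
        have h1c : 1 ≤ (β.erase x).card := by
          rw [Finset.card_erase_of_mem hx]; omega
        exact Finset.card_pos.mp (by omega)
      have hpb : pback (fun a => Φ (a, ({i} : Finset (Fin n)))) (α, β) = 0 := by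
        simp [pback, h1]
      rw [hf, hpb]
      generalize Φ (α, β) = a
      generalize cobf (fun x => Φ (x, insert i β)) α = c
      generalize ∑ x ∈ β, Φ (α, insert i (β.erase x)) = s
      revert a c s; decide

end Aux2

section Aux3
set_option linter.unusedSectionVars false

variable {V : Type*} [DecidableEq V] {n : ℕ}

lemma identity_II (ψ : Finset V → ZMod 2) (α : Finset V) (β : Finset (Fin n)) :
    pcob (pback ψ) (α, β) = pback (cobf ψ) (α, β) := by
  rw [pcob_eq]
  have h1 : cobf (fun a => pback ψ (a, (α, β).2)) (α, β).1
      = if β.card = 1 then cobf ψ α else 0 := by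
    by_cases h : β.card = 1
    · rw [if_pos h]
      apply Finset.sum_congr rfl
      intro x hx
      simp [pback, h]
    · rw [if_neg h]
      apply Finset.sum_eq_zero
      intro x hx
      simp [pback, h]
  have h2 : cobf (fun b => pback ψ ((α, β).1, b)) β = 0 := by
    by_cases h : β.card = 2
    · have hfull : β.filter (fun x => (β.erase x).Nonempty) = β := by
        apply Finset.filter_true_of_mem
        intro x hx
        have h1c : 1 ≤ (β.erase x).card := by
          rw [Finset.card_erase_of_mem hx]; omega
        exact Finset.card_pos.mp (by omega)
      unfold cobf
      rw [hfull]
      have hterm : ∀ x ∈ β, pback ψ ((α, β).1, β.erase x) = ψ α := by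
        intro x hx
        have : (β.erase x).card = 1 := by rw [Finset.card_erase_of_mem hx, h]
        simp [pback, this]
      rw [Finset.sum_congr rfl hterm, Finset.sum_const, h]
      have : ∀ a : ZMod 2, 2 • a = 0 := by decide
      exact this (ψ α)
    · apply Finset.sum_eq_zero
      intro x hx
      rcases Finset.mem_filter.mp hx with ⟨hxβ, hne⟩
      have hc : (β.erase x).card ≠ 1 := by
        rw [Finset.card_erase_of_mem hxβ]
        have := Finset.card_pos.mpr ⟨x, hxβ⟩
        omega
      simp [pback, hc]
  rw [h1, h2, add_zero]
  rfl

/-- closure: the free coboundary computes `cob` on faces of the complex. -/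
lemma cobf_eq_cob {X : Finset (Finset V)} (hX : IsComplex X) (j : ℕ)
    (ψ : Finset V → ZMod 2) (α : Finset V) (hα : α ∈ X) (hc : α.card = j + 2) :
    cobf ψ α = cob X j ψ α := by
  unfold cob
  have hset : (faces X j).filter (fun σ => σ ⊆ α)
      = (α.filter fun x => (α.erase x).Nonempty).image (α.erase ·) := by
    ext σ
    simp only [Finset.mem_filter, Finset.mem_image, faces]
    constructor
    · rintro ⟨⟨hσX, hσc⟩, hσsub⟩
      obtain ⟨x, hx, hxσ⟩ : ∃ x ∈ α, x ∉ σ := by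
        by_contra hcon
        push_neg at hcon
        have := Finset.card_le_card hcon
        omega
      have hax : σ = α.erase x := by
        apply Finset.eq_of_subset_of_card_le
        · exact Finset.subset_erase.mpr ⟨hσsub, hxσ⟩
        · rw [Finset.card_erase_of_mem hx]; omega
      refine ⟨x, ⟨hx, ?_⟩, hax.symm⟩
      rw [← hax]
      exact Finset.card_pos.mp (by omega)
    · rintro ⟨x, ⟨hx, hne⟩, rfl⟩
      have hcard : (α.erase x).card = j + 1 := by
        rw [Finset.card_erase_of_mem hx, hc]; omega
      refine ⟨⟨hX.2 α hα _ (Finset.erase_subset _ _) ?_, hcard⟩, Finset.erase_subset _ _⟩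
      exact Finset.card_pos.mp (by omega)
  rw [hset, Finset.sum_image]
  · rfl
  · intro x hx y hy h
    exact Finset.erase_injOn α ((Finset.mem_filter.mp hx).1)
      ((Finset.mem_filter.mp hy).1) h

lemma pnorm_congr {X : Finset (Finset V)} {k : ℕ}
    {f g : Finset V × Finset (Fin n) → ZMod 2}
    (h : ∀ p ∈ pcells X n k, f p = g p) : pnorm X n k f = pnorm X n k g := by
  unfold pnorm
  congr 1
  apply Finset.filter_congr
  intro p hp
  rw [h p hp]

lemma pnorm_add_le (X : Finset (Finset V)) (k : ℕ)
    (f g : Finset V × Finset (Fin n) → ZMod 2) :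
    pnorm X n k (fun p => f p + g p) ≤ pnorm X n k f + pnorm X n k g := by
  unfold pnorm
  refine le_trans (Finset.card_le_card ?_) (Finset.card_union_le _ _)
  intro p hp
  rcases Finset.mem_filter.mp hp with ⟨hp1, hp2⟩
  rw [Finset.mem_union, Finset.mem_filter, Finset.mem_filter]
  by_cases hf : f p = 0
  · right
    refine ⟨hp1, fun hg => hp2 ?_⟩
    show f p + g p = 0
    rw [hf, hg, add_zero]
  · exact Or.inl ⟨hp1, hf⟩

end Aux3

section Aux4
set_option linter.unusedSectionVars false

variable {V : Type*} [DecidableEq V] {n : ℕ}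

/-- support of `H_i (dΦ)` among `k`-cells -/
def Aset (X : Finset (Finset V)) (n k : ℕ) (Φ : Finset V × Finset (Fin n) → ZMod 2)
    (i : Fin n) : Finset (Finset V × Finset (Fin n)) :=
  (pcells X n k).filter fun p => i ∉ p.2 ∧ pcob Φ (p.1, insert i p.2) ≠ 0

/-- support of `dΦ` on cells whose simplex part has ≥ 2 vertices -/
def S2 (X : Finset (Finset V)) (n k : ℕ) (Φ : Finset V × Finset (Fin n) → ZMod 2) :
    Finset (Finset V × Finset (Fin n)) :=
  (pcells X n (k+1)).filter fun q => pcob Φ q ≠ 0 ∧ 2 ≤ q.2.card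

/-- C1: counting the support of `pback ξ + H_i(dΦ)`. -/
lemma C1 (X : Finset (Finset V)) (k : ℕ) (Φ : Finset V × Finset (Fin n) → ZMod 2)
    (ξ : Finset V → ZMod 2) (i : Fin n) :
    pnorm X n k (fun p => pback ξ p + Hop i (pcob Φ) p)
      ≤ n * cnorm X k ξ + (Aset X n k Φ i).card := by
  refine le_trans (pnorm_add_le X k _ _) (Nat.add_le_add ?h1 ?h2)
  case h1 =>
    unfold pnorm
    have hsub : (pcells X n k).filter (fun p => pback ξ p ≠ 0)
        ⊆ (csupp X k ξ) ×ˢ ((Finset.univ : Finset (Fin n)).image ({·})) := by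
      intro p hp
      rcases Finset.mem_filter.mp hp with ⟨hp1, hp2⟩
      rcases mem_pcells.mp hp1 with ⟨hX1, hne, hcard⟩
      have hc1 : p.2.card = 1 ∧ ξ p.1 ≠ 0 := by
        by_cases h : p.2.card = 1
        · refine ⟨h, fun h0 => hp2 ?_⟩
          simp [pback, h, h0]
        · exact absurd (by simp [pback, h]) hp2
      rw [Finset.mem_product]
      constructor
      · rw [csupp, Finset.mem_filter, faces, Finset.mem_filter]
        exact ⟨⟨hX1, by omega⟩, hc1.2⟩
      · obtain ⟨j, hj⟩ := Finset.card_eq_one.mp hc1.1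
        exact Finset.mem_image.mpr ⟨j, Finset.mem_univ j, hj.symm⟩
    refine le_trans (Finset.card_le_card hsub) ?_
    rw [Finset.card_product]
    calc (csupp X k ξ).card * ((Finset.univ : Finset (Fin n)).image ({·})).card
        ≤ (csupp X k ξ).card * n := by
          apply Nat.mul_le_mul_left
          refine le_trans (Finset.card_image_le) ?_
          simp
      _ = n * cnorm X k ξ := by rw [Nat.mul_comm]; rfl
  case h2 =>
    unfold pnorm
    apply Finset.card_le_card
    intro p hp
    rcases Finset.mem_filter.mp hp with ⟨hp1, hp2⟩
    have : i ∉ p.2 ∧ pcob Φ (p.1, insert i p.2) ≠ 0 := by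
      by_cases h : i ∈ p.2
      · exact absurd (by simp [Hop, h]) hp2
      · refine ⟨h, fun h0 => hp2 ?_⟩
        simp [Hop, h, h0]
    exact Finset.mem_filter.mpr ⟨hp1, this⟩

lemma Aset_mem_S2 {X : Finset (Finset V)} {k : ℕ}
    {Φ : Finset V × Finset (Fin n) → ZMod 2} {i : Fin n}
    {p : Finset V × Finset (Fin n)} (hp : p ∈ Aset X n k Φ i) :
    (p.1, insert i p.2) ∈ S2 X n k Φ := by
  rcases Finset.mem_filter.mp hp with ⟨hp1, hi, hc⟩
  rcases mem_pcells.mp hp1 with ⟨hX1, hne, hcard⟩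
  have hins : (insert i p.2).card = p.2.card + 1 := Finset.card_insert_of_notMem hi
  have hmem : (p.1, insert i p.2) ∈ pcells X n (k+1) := by
    rw [mem_pcells]
    refine ⟨hX1, Finset.insert_nonempty _ _, ?_⟩
    show p.1.card + (insert i p.2).card = (k+1) + 2
    omega
  refine Finset.mem_filter.mpr ⟨hmem, hc, ?_⟩
  show 2 ≤ (insert i p.2).card
  have := hne.card_pos
  omega

/-- C2 -/
lemma C2 (X : Finset (Finset V)) (k : ℕ) (Φ : Finset V × Finset (Fin n) → ZMod 2)
    (i : Fin n) : (Aset X n k Φ i).card ≤ (S2 X n k Φ).card := by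
  apply Finset.card_le_card_of_injOn (fun p => (p.1, insert i p.2))
  · intro p hp
    exact Aset_mem_S2 hp
  · intro p hp q hq h
    have hip : i ∉ p.2 := (Finset.mem_filter.mp hp).2.1
    have hiq : i ∉ q.2 := (Finset.mem_filter.mp hq).2.1
    have h' : (p.1, insert i p.2) = (q.1, insert i q.2) := h
    obtain ⟨h1, h2⟩ := Prod.mk.inj h'
    have h3 : p.2 = q.2 := by
      rw [← Finset.erase_insert hip, ← Finset.erase_insert hiq, h2]
    exact Prod.ext h1 h3

/-- C3: double counting. -/
lemma C3 (X : Finset (Finset V)) (hX : IsComplex X) (k : ℕ)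
    (Φ : Finset V × Finset (Fin n) → ZMod 2) :
    ∑ i : Fin n, (Aset X n k Φ i).card ≤ (k + 2) * (S2 X n k Φ).card := by
  have hsig : ∑ i : Fin n, (Aset X n k Φ i).card
      = ((Finset.univ : Finset (Fin n)).sigma (fun i => Aset X n k Φ i)).card := by
    rw [Finset.card_sigma]
  rw [hsig]
  have hinj : ((Finset.univ : Finset (Fin n)).sigma (fun i => Aset X n k Φ i)).card
      ≤ ((S2 X n k Φ).sigma (fun q => q.2)).card := by
    apply Finset.card_le_card_of_injOn
      (fun z => ⟨(z.2.1, insert z.1 z.2.2), z.1⟩)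
    · intro z hz
      rcases Finset.mem_sigma.mp hz with ⟨_, hz2⟩
      exact Finset.mem_sigma.mpr ⟨Aset_mem_S2 hz2, Finset.mem_insert_self _ _⟩
    · rintro ⟨i1, p⟩ hz ⟨i2, q⟩ hw h
      rcases Finset.mem_sigma.mp hz with ⟨_, hz2⟩
      rcases Finset.mem_sigma.mp hw with ⟨_, hw2⟩
      have hiz : i1 ∉ p.2 := (Finset.mem_filter.mp hz2).2.1
      have hiw : i2 ∉ q.2 := (Finset.mem_filter.mp hw2).2.1
      have h' : (⟨(p.1, insert i1 p.2), i1⟩ : (_ : Finset V × Finset (Fin n)) × Fin n)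
          = ⟨(q.1, insert i2 q.2), i2⟩ := h
      obtain ⟨h0, h1'⟩ := Sigma.mk.inj_iff.mp h'
      have h1 : i1 = i2 := eq_of_heq h1'
      subst h1
      obtain ⟨h2, h4⟩ := Prod.mk.inj h0
      have h3 : p.2 = q.2 := by
        rw [← Finset.erase_insert hiz, ← Finset.erase_insert hiw, h4]
      have h5 : p = q := Prod.ext h2 h3
      rw [h5]
  refine le_trans hinj ?_
  rw [Finset.card_sigma]
  have hbd : ∀ q ∈ S2 X n k Φ, q.2.card ≤ k + 2 := by
    intro q hq
    rcases Finset.mem_filter.mp hq with ⟨hq1, _⟩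
    rcases mem_pcells.mp hq1 with ⟨hX1, hne, hcard⟩
    have h1 : 1 ≤ q.1.card := (hX.1 q.1 hX1).card_pos
    omega
  calc ∑ q ∈ S2 X n k Φ, q.2.card ≤ ∑ q ∈ S2 X n k Φ, (k + 2) := Finset.sum_le_sum hbd
    _ = (S2 X n k Φ).card * (k + 2) := by rw [Finset.sum_const, smul_eq_mul]
    _ = (k + 2) * (S2 X n k Φ).card := Nat.mul_comm _ _

end Aux4

section Aux5
set_option linter.unusedSectionVars false

variable {V : Type*} [DecidableEq V] {n : ℕ}

lemma cobf_const_card_two {γ : Type*} [DecidableEq γ] (s : Finset γ) (h : s.card = 2)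
    (c : ZMod 2) : cobf (fun _ => c) s = 0 := by
  unfold cobf
  have hfull : s.filter (fun x => (s.erase x).Nonempty) = s := by
    apply Finset.filter_true_of_mem
    intro x hx
    have h1c : 1 ≤ (s.erase x).card := by
      rw [Finset.card_erase_of_mem hx]; omega
    exact Finset.card_pos.mp (by omega)
  rw [hfull, Finset.sum_const, h]
  have h2 : ∀ a : ZMod 2, 2 • a = 0 := by decide
  exact h2 c

/-- C4 -/
lemma C4 (X : Finset (Finset V)) (hX : IsComplex X) (k : ℕ)
    (Φ : Finset V × Finset (Fin n) → ZMod 2) :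
    (∑ i : Fin n, cnorm X (k+1) (cob X k (fun α => Φ (α, ({i} : Finset (Fin n))))))
      + (S2 X n k Φ).card ≤ pnorm X n (k+1) (pcob Φ) := by
  classical
  set F := (pcells X n (k+1)).filter (fun q => pcob Φ q ≠ 0) with hF
  have hsplit : (F.filter (fun q => 2 ≤ q.2.card)).card
      + (F.filter (fun q => ¬ 2 ≤ q.2.card)).card = F.card :=
    Finset.card_filter_add_card_filter_not _
  have hS2 : S2 X n k Φ = F.filter (fun q => 2 ≤ q.2.card) := by
    rw [hF, Finset.filter_filter]
    rfl
  have hD1 : (∑ i : Fin n, cnorm X (k+1) (cob X k (fun α => Φ (α, ({i} : Finset (Fin n))))))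
      ≤ (F.filter (fun q => ¬ 2 ≤ q.2.card)).card := by
    have hsig : (∑ i : Fin n, cnorm X (k+1) (cob X k (fun α => Φ (α, ({i} : Finset (Fin n))))))
        = ((Finset.univ : Finset (Fin n)).sigma
            (fun i => csupp X (k+1) (cob X k (fun α => Φ (α, ({i} : Finset (Fin n))))))).card := by
      rw [Finset.card_sigma]
      rfl
    rw [hsig]
    apply Finset.card_le_card_of_injOn (fun z => (z.2, ({z.1} : Finset (Fin n))))
    · rintro ⟨i, α⟩ hz
      rcases Finset.mem_sigma.mp hz with ⟨-, hz2⟩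
      rcases Finset.mem_filter.mp hz2 with ⟨hf, hcne⟩
      have hf' : α ∈ X ∧ α.card = (k+1)+1 := by
        simpa [faces, Finset.mem_filter] using hf
      obtain ⟨hαX, hαc⟩ := hf'
      have hmem : ((α, ({i} : Finset (Fin n))) : Finset V × Finset (Fin n))
          ∈ pcells X n (k+1) := by
        rw [mem_pcells]
        refine ⟨hαX, Finset.singleton_nonempty _, ?_⟩
        show α.card + ({i} : Finset (Fin n)).card = (k+1) + 2
        rw [Finset.card_singleton]
        omega
      have hval : pcob Φ (α, ({i} : Finset (Fin n)))
          = cob X k (fun a => Φ (a, ({i} : Finset (Fin n)))) α := by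
        rw [pcob_eq]
        have hz1 : cobf (fun b => Φ (α, b)) ({i} : Finset (Fin n)) = 0 :=
          cobf_of_card_le_one _ _ (by simp)
        rw [hz1, add_zero]
        exact cobf_eq_cob hX k _ α hαX (by omega)
      apply Finset.mem_filter.mpr
      refine ⟨Finset.mem_filter.mpr ⟨hmem, ?_⟩, ?_⟩
      · show pcob Φ (α, ({i} : Finset (Fin n))) ≠ 0
        rw [hval]; exact hcne
      · show ¬ 2 ≤ ({i} : Finset (Fin n)).card
        simp
    · rintro ⟨i1, α1⟩ hz ⟨i2, α2⟩ hw h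
      have h' : ((α1, ({i1} : Finset (Fin n))) : Finset V × Finset (Fin n))
          = (α2, ({i2} : Finset (Fin n))) := h
      obtain ⟨h1, h2⟩ := Prod.mk.inj h'
      have h3 : i1 = i2 := Finset.singleton_injective h2
      subst h3; rw [h1]
  have hpn : pnorm X n (k+1) (pcob Φ) = F.card := rfl
  have hS2c : (S2 X n k Φ).card = (F.filter (fun q => 2 ≤ q.2.card)).card := by rw [hS2]
  rw [hpn, ← hsplit]
  omega

/-- the homotopy identity specialised to 0-cells -/
lemma identity_zero (X : Finset (Finset V)) (hX : IsComplex X)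
    (Φ : Finset V × Finset (Fin n) → ZMod 2) (i : Fin n) :
    ∀ p ∈ pcells X n 0,
      Φ p = pback (fun a => Φ (a, ({i} : Finset (Fin n)))) p + Hop i (pcob Φ) p := by
  intro p hp
  rcases mem_pcells.mp hp with ⟨h1, h2, h3⟩
  have hα : p.1.card = 1 := by
    have ha := (hX.1 p.1 h1).card_pos
    have hb := h2.card_pos
    omega
  have hβ : p.2.card = 1 := by
    have ha := (hX.1 p.1 h1).card_pos
    omega
  have hid := identity_I Φ i p.1 p.2 h2
  have hz : pcob (Hop i Φ) (p.1, p.2) = 0 := by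
    rw [pcob_eq]
    rw [cobf_of_card_le_one _ _ (le_of_eq hα), cobf_of_card_le_one _ _ (le_of_eq hβ),
      add_zero]
  rw [hz, add_zero] at hid
  rw [← Prod.mk.eta (p := p)]
  exact hid

end Aux5

section Aux6
set_option linter.unusedSectionVars false

variable {V : Type*} [DecidableEq V] {n : ℕ}

lemma pcob_const_one (X : Finset (Finset V)) (hX : IsComplex X) (i : Fin n)
    {p : Finset V × Finset (Fin n)} (hp : p ∈ pcells X n 0) (hi : i ∉ p.2) :
    pcob (fun _ => (1 : ZMod 2)) (p.1, insert i p.2) = 0 := by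
  rcases mem_pcells.mp hp with ⟨h1, h2, h3⟩
  have hα : p.1.card = 1 := by
    have ha := (hX.1 p.1 h1).card_pos
    have hb := h2.card_pos
    omega
  have hβ : p.2.card = 1 := by
    have ha := (hX.1 p.1 h1).card_pos
    omega
  rw [pcob_eq]
  have hz1 : cobf (fun a => (1 : ZMod 2)) ((p.1, insert i p.2).1) = 0 :=
    cobf_of_card_le_one _ _ (le_of_eq hα)
  have hz2 : cobf (fun b => (1 : ZMod 2)) ((p.1, insert i p.2).2) = 0 := by
    apply cobf_const_card_two
    show (insert i p.2).card = 2
    rw [Finset.card_insert_of_notMem hi, hβ]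
  rw [hz1, hz2, add_zero]

/-- C5: the per-apex cosystolic bound. -/
lemma C5 (X : Finset (Finset V)) (hX : IsComplex X) (k : ℕ)
    (Φ : Finset V × Finset (Fin n) → ZMod 2) (i : Fin n) :
    pcosys X n k Φ
      ≤ n * cosys X k (fun α => Φ (α, ({i} : Finset (Fin n)))) + (Aset X n k Φ i).card := by
  classical
  by_cases hk : k = 0
  · subst hk
    rw [pcosys, if_pos rfl, cosys, if_pos rfl]
    set φi := fun α => Φ (α, ({i} : Finset (Fin n))) with hφi
    have hb1 : pnorm X n 0 Φ ≤ n * cnorm X 0 φi + (Aset X n 0 Φ i).card := by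
      have hcg : pnorm X n 0 Φ
          = pnorm X n 0 (fun p => pback φi p + Hop i (pcob Φ) p) :=
        pnorm_congr (identity_zero X hX Φ i)
      rw [hcg]
      exact C1 X 0 Φ φi i
    have hb2 : pnorm X n 0 (fun p => 1 + Φ p)
        ≤ n * cnorm X 0 (fun α => 1 + φi α) + (Aset X n 0 Φ i).card := by
      have hcg : pnorm X n 0 (fun p => 1 + Φ p)
          = pnorm X n 0 (fun p => pback (fun α => 1 + φi α) p + Hop i (pcob Φ) p) := by
        apply pnorm_congr
        intro p hp
        have hid := identity_zero X hX (fun q => 1 + Φ q) i p hp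
        have hHop : Hop i (pcob fun q => 1 + Φ q) p = Hop i (pcob Φ) p := by
          unfold Hop
          by_cases hi : i ∈ p.2
          · rw [if_pos hi, if_pos hi]
          · rw [if_neg hi, if_neg hi]
            rw [pcob_addfun (fun _ => (1 : ZMod 2)) Φ, pcob_const_one X hX i hp hi,
              zero_add]
        have hid' : 1 + Φ p
            = pback (fun α => 1 + φi α) p + Hop i (pcob fun q => 1 + Φ q) p := hid
        rw [hid', hHop]
      rw [hcg]
      exact C1 X 0 Φ (fun α => 1 + φi α) i
    rcases le_total (cnorm X 0 φi) (cnorm X 0 (fun α => 1 + φi α)) with hle | hle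
    · rw [min_eq_left hle]
      exact le_trans (min_le_left _ _) hb1
    · rw [min_eq_right hle]
      exact le_trans (min_le_right _ _) hb2
  · rw [pcosys, if_neg hk, cosys, if_neg hk]
    set φi := fun α => Φ (α, ({i} : Finset (Fin n))) with hφi
    have hne : {m | ∃ ψ : Finset V → ZMod 2,
        m = cnorm X k fun τ => φi τ + cob X (k - 1) ψ τ}.Nonempty := ⟨_, 0, rfl⟩
    obtain ⟨ψ, hψ⟩ := Nat.sInf_mem hne
    set μ := sInf {m | ∃ ψ : Finset V → ZMod 2,
        m = cnorm X k fun τ => φi τ + cob X (k - 1) ψ τ} with hμ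
    set ξ := fun τ => φi τ + cob X (k - 1) ψ τ with hξ
    have hstep : sInf {m | ∃ Ψ : Finset V × Finset (Fin n) → ZMod 2,
        m = pnorm X n k fun p => Φ p + pcob Ψ p}
        ≤ pnorm X n k (fun p => Φ p + pcob (fun q => Hop i Φ q + pback ψ q) p) :=
      Nat.sInf_le ⟨_, rfl⟩
    refine le_trans hstep ?_
    have hcg : pnorm X n k (fun p => Φ p + pcob (fun q => Hop i Φ q + pback ψ q) p)
        = pnorm X n k (fun p => pback ξ p + Hop i (pcob Φ) p) := by
      apply pnorm_congr
      rintro ⟨α, β⟩ hp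
      rcases mem_pcells.mp hp with ⟨h1, h2, h3⟩
      have hαX : α ∈ X := h1
      have hcards : α.card + β.card = k + 2 := h3
      have hβne : β.Nonempty := h2
      have hI := identity_I Φ i α β hβne
      have hpt : pback (fun a => φi a + cobf ψ a) ((α, β) : Finset V × Finset (Fin n))
          = pback ξ (α, β) := by
        unfold pback
        by_cases hc : (((α, β) : Finset V × Finset (Fin n))).2.card = 1
        · rw [if_pos hc, if_pos hc]
          have hβ1 : β.card = 1 := hc
          have hcob := cobf_eq_cob hX (k-1) ψ α hαX (by omega)
          show φi α + cobf ψ α = ξ α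
          rw [hξ, hcob]
        · rw [if_neg hc, if_neg hc]
      show Φ (α, β) + pcob (fun q => Hop i Φ q + pback ψ q) (α, β)
          = pback ξ (α, β) + Hop i (pcob Φ) (α, β)
      rw [pcob_addfun, identity_II]
      calc Φ (α, β) + (pcob (Hop i Φ) (α, β) + pback (cobf ψ) (α, β))
          = (Φ (α, β) + pcob (Hop i Φ) (α, β)) + pback (cobf ψ) (α, β) := by ring
        _ = (pback (fun a => Φ (a, ({i} : Finset (Fin n)))) (α, β)
              + Hop i (pcob Φ) (α, β)) + pback (cobf ψ) (α, β) := by rw [hI]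
        _ = (pback (fun a => Φ (a, ({i} : Finset (Fin n)))) (α, β)
              + pback (cobf ψ) (α, β)) + Hop i (pcob Φ) (α, β) := by ring
        _ = pback (fun a => φi a + cobf ψ a) (α, β) + Hop i (pcob Φ) (α, β) := by
              rw [pback_addfun]
        _ = pback ξ (α, β) + Hop i (pcob Φ) (α, β) := by rw [hpt]
    rw [hcg]
    have := C1 X k Φ ξ i
    have hcn : cnorm X k ξ = μ := hψ.symm
    rw [hcn] at this
    exact this

end Aux6

section Aux7
set_option linter.unusedSectionVars false

variable {V : Type*} [DecidableEq V] {n : ℕ}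

lemma cheeger_mul_le (X : Finset (Finset V)) (k : ℕ) (φ : Finset V → ZMod 2) :
    cheeger X k * (cosys X k φ : ENNReal) ≤ (cnorm X (k+1) (cob X k φ) : ENNReal) := by
  by_cases h : cosys X k φ = 0
  · simp [h]
  · have hpos : 0 < cosys X k φ := Nat.pos_of_ne_zero h
    have hle : cheeger X k
        ≤ (cnorm X (k+1) (cob X k φ) : ENNReal) / (cosys X k φ : ENNReal) :=
      sInf_le ⟨φ, hpos, rfl⟩
    calc cheeger X k * (cosys X k φ : ENNReal)
        ≤ ((cnorm X (k+1) (cob X k φ) : ENNReal) / (cosys X k φ : ENNReal))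
            * (cosys X k φ : ENNReal) := mul_le_mul_left hle _
      _ = (cnorm X (k+1) (cob X k φ) : ENNReal) :=
          ENNReal.div_mul_cancel (by exact_mod_cast h) (ENNReal.natCast_ne_top _)

lemma main_bound (X : Finset (Finset V)) (hX : IsComplex X) (hn : 2 ≤ n) (k : ℕ)
    (Φ : Finset V × Finset (Fin n) → ZMod 2) :
    min (cheeger X k) (max 1 ((n : ENNReal) / ((k : ENNReal) + 2)))
        * (pcosys X n k Φ : ENNReal)
      ≤ (pnorm X n (k + 1) (pcob Φ) : ENNReal) := by
  classical
  set h := cheeger X k with hdefh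
  set m := pcosys X n k Φ with hdefm
  set D := pnorm X n (k+1) (pcob Φ) with hdefD
  set D2 := (S2 X n k Φ).card with hdefD2
  set μ : Fin n → ℕ := fun i => cosys X k (fun α => Φ (α, ({i} : Finset (Fin n)))) with hdefμ
  set dd : Fin n → ℕ
    := fun i => cnorm X (k+1) (cob X k (fun α => Φ (α, ({i} : Finset (Fin n))))) with hdefdd
  set A : Fin n → ℕ := fun i => (Aset X n k Φ i).card with hdefA
  have hnn : 0 < n := by omega
  have f1 : ∀ i, m ≤ n * μ i + A i := fun i => C5 X hX k Φ i
  have f2 : ∀ i, A i ≤ D2 := fun i => C2 X k Φ i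
  have f3 : ∑ i, A i ≤ (k+2) * D2 := C3 X hX k Φ
  have f4 : (∑ i, dd i) + D2 ≤ D := C4 X hX k Φ
  have f5 : ∀ i, h * (μ i : ENNReal) ≤ (dd i : ENNReal) := fun i => cheeger_mul_le X k _
  have esum : ∀ c : ℕ, (∑ _i : Fin n, c) = n * c := by
    intro c
    rw [Finset.sum_const, Finset.card_univ, Fintype.card_fin, smul_eq_mul]
  have hsummed : n * m ≤ n * (∑ i, μ i) + ∑ i, A i := by
    calc n * m = ∑ _i : Fin n, m := (esum m).symm
      _ ≤ ∑ i, (n * μ i + A i) := Finset.sum_le_sum (fun i _ => f1 i)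
      _ = n * (∑ i, μ i) + ∑ i, A i := by rw [Finset.sum_add_distrib, Finset.mul_sum]
  have key1 : m ≤ (∑ i, μ i) + D2 := by
    have h2 : n * m ≤ n * ((∑ i, μ i) + D2) := by
      have e3 : ∑ i, A i ≤ n * D2 := by
        calc ∑ i, A i ≤ ∑ _i : Fin n, D2 := Finset.sum_le_sum (fun i _ => f2 i)
          _ = n * D2 := esum D2
      calc n * m ≤ n * (∑ i, μ i) + ∑ i, A i := hsummed
        _ ≤ n * (∑ i, μ i) + n * D2 := Nat.add_le_add_left e3 _
        _ = n * ((∑ i, μ i) + D2) := (Nat.mul_add _ _ _).symm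
    exact Nat.le_of_mul_le_mul_left h2 hnn
  have key2 : n * m ≤ n * (∑ i, μ i) + (k+2) * D2 :=
    le_trans hsummed (Nat.add_le_add_left f3 _)
  have hA2 : min h 1 * (m : ENNReal) ≤ (D : ENNReal) := by
    rcases le_total h 1 with hh | hh
    · rw [min_eq_left hh]
      calc h * (m : ENNReal)
          ≤ h * (((∑ i, μ i) + D2 : ℕ) : ENNReal) :=
            mul_le_mul_right (Nat.cast_le.mpr key1) h
        _ = (∑ i, h * (μ i : ENNReal)) + h * (D2 : ENNReal) := by
            push_cast
            rw [mul_add, Finset.mul_sum]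
        _ ≤ (∑ i, (dd i : ENNReal)) + 1 * (D2 : ENNReal) :=
            add_le_add (Finset.sum_le_sum fun i _ => f5 i) (mul_le_mul_left hh _)
        _ = (((∑ i, dd i) + D2 : ℕ) : ENNReal) := by push_cast; rw [one_mul]
        _ ≤ (D : ENNReal) := Nat.cast_le.mpr f4
    · rw [min_eq_right hh, one_mul]
      have hμd : ∀ i, μ i ≤ dd i := by
        intro i
        have hcalc : (μ i : ENNReal) ≤ (dd i : ENNReal) := by
          calc (μ i : ENNReal) = 1 * (μ i : ENNReal) := (one_mul _).symm
            _ ≤ h * (μ i : ENNReal) := mul_le_mul_left hh _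
            _ ≤ (dd i : ENNReal) := f5 i
        exact_mod_cast hcalc
      have hfin : m ≤ D :=
        le_trans key1 (le_trans
          (Nat.add_le_add_right (Finset.sum_le_sum fun i _ => hμd i) D2) f4)
      exact Nat.cast_le.mpr hfin
  have hA1 : min h ((n : ENNReal) / ((k : ENNReal) + 2)) * (m : ENNReal) ≤ (D : ENNReal) := by
    set s := min h ((n : ENNReal) / ((k : ENNReal) + 2)) with hdefs
    have hs1 : s ≤ h := min_le_left _ _
    have hs2 : s ≤ (n : ENNReal) / ((k : ENNReal) + 2) := min_le_right _ _
    have hk2 : ((k : ENNReal) + 2) ≠ 0 := by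
      intro H
      rw [add_eq_zero] at H
      exact (by norm_num : (2 : ENNReal) ≠ 0) H.2
    have hk2' : ((k : ENNReal) + 2) ≠ ⊤ :=
      ENNReal.add_ne_top.mpr ⟨ENNReal.natCast_ne_top k, by norm_num⟩
    have hsk : s * ((k : ENNReal) + 2) ≤ (n : ENNReal) := by
      calc s * ((k : ENNReal) + 2)
          ≤ ((n : ENNReal) / ((k : ENNReal) + 2)) * ((k : ENNReal) + 2) :=
            mul_le_mul_left hs2 _
        _ = (n : ENNReal) := ENNReal.div_mul_cancel hk2 hk2'
    have hges : (n : ENNReal) * (s * (m : ENNReal)) ≤ (n : ENNReal) * (D : ENNReal) := by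
      calc (n : ENNReal) * (s * (m : ENNReal)) = s * (((n * m : ℕ)) : ENNReal) := by
            push_cast; ring
        _ ≤ s * (((n * (∑ i, μ i) + (k+2) * D2 : ℕ)) : ENNReal) :=
            mul_le_mul_right (Nat.cast_le.mpr key2) s
        _ = (∑ i, (n : ENNReal) * (s * (μ i : ENNReal)))
              + (s * ((k : ENNReal) + 2)) * (D2 : ENNReal) := by
            push_cast
            rw [Finset.mul_sum]
            ring_nf
            rw [Finset.mul_sum]
            ring_nf
        _ ≤ (∑ i, (n : ENNReal) * (dd i : ENNReal))
              + (n : ENNReal) * (D2 : ENNReal) := by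
            apply add_le_add
            · refine Finset.sum_le_sum fun i _ => mul_le_mul_right ?_ _
              exact le_trans (mul_le_mul_left hs1 _) (f5 i)
            · exact mul_le_mul_left hsk _
        _ = (n : ENNReal) * ((((∑ i, dd i) + D2 : ℕ)) : ENNReal) := by
            push_cast
            rw [mul_add, Finset.mul_sum]
        _ ≤ (n : ENNReal) * (D : ENNReal) := mul_le_mul_right (Nat.cast_le.mpr f4) _
    have hn0 : (n : ENNReal) ≠ 0 := Nat.cast_ne_zero.mpr (by omega)
    exact (ENNReal.mul_le_mul_iff_right hn0 (ENNReal.natCast_ne_top n)).mp hges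
  have hmax : min h (max 1 ((n : ENNReal) / ((k : ENNReal) + 2)))
      = max (min h 1) (min h ((n : ENNReal) / ((k : ENNReal) + 2))) :=
    min_max_distrib_left _ _ _
  rw [hmax]
  rcases max_choice (min h 1) (min h ((n : ENNReal) / ((k : ENNReal) + 2))) with hc | hc <;>
    rw [hc]
  · exact hA2
  · exact hA1

end Aux7

/-- **Expansion of a product with a simplex**: every `k`-cochain `Φ` of `X × Δ^{n-1}` with
positive cosystolic norm satisfies
`‖d_k Φ‖ ≥ min{h^k(X), max{1, n/(k+2)}} ⬝ ‖Φ‖_csy`; that is,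
`h^k(X × Δ^{n-1}) ≥ min{h^k(X), max{1, n/(k+2)}}`. -/
theorem product_simplex_expansion {V : Type*} [DecidableEq V]
    (X : Finset (Finset V)) (hX : IsComplex X) (n : ℕ) (hn : 2 ≤ n) (k : ℕ)
    (hdef : ∃ φ : Finset V → ZMod 2, 0 < cosys X k φ) :
    (∀ Φ : Finset V × Finset (Fin n) → ZMod 2, 0 < pcosys X n k Φ →
        min (cheeger X k) (max 1 ((n : ENNReal) / ((k : ENNReal) + 2))) *
            (pcosys X n k Φ : ENNReal) ≤
          (pnorm X n (k + 1) (pcob Φ) : ENNReal)) ∧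
      min (cheeger X k) (max 1 ((n : ENNReal) / ((k : ENNReal) + 2))) ≤
        pcheeger X n k := by
  constructor
  · intro Φ _hpos
    exact main_bound X hX hn k Φ
  · unfold pcheeger
    apply le_sInf
    rintro r ⟨Φ, hpos, rfl⟩
    rw [ENNReal.le_div_iff_mul_le (Or.inl (Nat.cast_ne_zero.mpr hpos.ne'))
      (Or.inl (ENNReal.natCast_ne_top _))]
    exact main_bound X hX hn k Φ
end
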